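/- arXiv:1412.3747 — 2 statements merged into one kernel-verified Lean document; each statement's English description precedes it below -/
import Mathlib

section
/- Let λ ∈ P^Λ_n be a multipartition and let s, t be standard λ-tableaux. Then s dominates t (s ⊵ t) if and only if d(s) ≤ d(t) in the Bruhat order on S_n, where d(u) is the unique permutation with t^λ · d(u) = u. -/
noncomputable section
open scoped Classical
namespace Paper

/-! ## Multipartitions and tableaux

A node is a triple (component, row, column), all 0-based.  A multicomposition of level
`l` is a function `Fin l → ℕ → ℕ` (component ↦ row ↦ row length).  Tableaux take values
in `{1,…,n}` (and `0` outside the diagram). -/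

abbrev Node (l : ℕ) := Fin l × ℕ × ℕ

/-- the Young diagram of a multicomposition. -/
def diag (l : ℕ) (lam : Fin l → ℕ → ℕ) : Set (Node l) :=
  {x | x.2.2 < lam x.1 x.2.1}

/-- `lam` is a multipartition of `n` (of level `l`). -/
def IsMultipartition (l n : ℕ) (lam : Fin l → ℕ → ℕ) : Prop :=
  (∀ c : Fin l, Antitone (lam c)) ∧ (∀ (c : Fin l) (r : ℕ), lam c r ≠ 0 → r < n) ∧
    (∑ c : Fin l, ∑ r ∈ Finset.range n, lam c r) = n

/-- the size of the `c`-th component of `lam` (whose rows are supported in `[0,n)`). -/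
def compSize (l n : ℕ) (lam : Fin l → ℕ → ℕ) (c : Fin l) : ℕ :=
  ∑ r ∈ Finset.range n, lam c r

/-- a `lam`-tableau: a bijection from the diagram of `lam` onto `{1,…,n}`,
normalised to vanish off the diagram. -/
def IsTableau (l n : ℕ) (lam : Fin l → ℕ → ℕ) (T : Node l → ℕ) : Prop :=
  Set.BijOn T (diag l lam) (Set.Icc 1 n) ∧ ∀ x, x ∉ diag l lam → T x = 0

/-- entries increase along rows and down columns. -/
def RowColIncreasing (l : ℕ) (lam : Fin l → ℕ → ℕ) (T : Node l → ℕ) : Prop :=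
  (∀ (c : Fin l) (r j : ℕ), j + 1 < lam c r → T (c, r, j) < T (c, r, j + 1)) ∧
  (∀ (c : Fin l) (r j : ℕ), j < lam c (r + 1) → T (c, r, j) < T (c, r + 1, j))

/-- `T` is a standard `lam`-tableau (in particular `lam` is a multipartition of `n`). -/
def IsStdTab (l n : ℕ) (lam : Fin l → ℕ → ℕ) (T : Node l → ℕ) : Prop :=
  IsMultipartition l n lam ∧ IsTableau l n lam T ∧ RowColIncreasing l lam T

/-- the initial tableau `t^λ`, filling `1,2,…,n` along the rows of the first component,
then the second component, and so on; it is the unique dominance-greatest standard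
`λ`-tableau. -/
def initTab (l n : ℕ) (lam : Fin l → ℕ → ℕ) : Node l → ℕ := fun x =>
  if x.2.2 < lam x.1 x.2.1 then
    (∑ c ∈ Finset.univ.filter (fun c : Fin l => c < x.1), compSize l n lam c) +
      (∑ r ∈ Finset.range x.2.1, lam x.1 r) + x.2.2 + 1
  else 0

/-- the shape of `T|_k`, the subtableau of entries `≤ k`. -/
def restShape (l : ℕ) (lam : Fin l → ℕ → ℕ) (T : Node l → ℕ) (k : ℕ) :
    Fin l → ℕ → ℕ :=
  fun c r => ((Finset.range (lam c r)).filter fun j => T (c, r, j) ≤ k).card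

/-- the partial sum `∑_{c' < c} |λ^{(c')}| + ∑_{r < k} λ^{(c)}_r` used to define
the dominance order. -/
def partialSum (l n : ℕ) (lam : Fin l → ℕ → ℕ) (c : Fin l) (k : ℕ) : ℕ :=
  (∑ c' ∈ Finset.univ.filter (fun c' : Fin l => c' < c), compSize l n lam c') +
    ∑ r ∈ Finset.range k, lam c r

/-- the dominance order `lam ⊵ mu` on multicompositions of the same level. -/
def ShapeDom (l n : ℕ) (lam mu : Fin l → ℕ → ℕ) : Prop :=
  ∀ (c : Fin l) (k : ℕ), partialSum l n mu c k ≤ partialSum l n lam c k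

/-- the dominance order `S ⊵ T` on `λ`-tableaux: `Shape(S|_k) ⊵ Shape(T|_k)` for all `k`. -/
def TabDom (l n : ℕ) (lam : Fin l → ℕ → ℕ) (S T : Node l → ℕ) : Prop :=
  ∀ k : ℕ, ShapeDom l n (restShape l lam S k) (restShape l lam T k)

/-- the adjacent transposition `s_r = (r, r+1)` on entries. -/
def sw (r : ℕ) : Equiv.Perm ℕ := Equiv.swap r (r + 1)

/-- the (right) action of a permutation of the entries on a tableau:
`(T·w)(x) = (T x)·w`. -/
def actT (l : ℕ) (T : Node l → ℕ) (w : Equiv.Perm ℕ) : Node l → ℕ := fun x => w (T x)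

/-- the action of a word `s_{r_1} s_{r_2} ⋯ s_{r_m}` (leftmost letter acting first). -/
def actWord (l : ℕ) (T : Node l → ℕ) (L : List ℕ) : Node l → ℕ :=
  L.foldl (fun U r => actT l U (sw r)) T

/-! ### The standard expression of `d(t)`

For a standard `λ`-tableau `t` let `t^{(i)}` be the tableau agreeing with `t` on the
entries `≥ i` and equal to the initial tableau of its shape on the entries `< i`;
then `t^{(i+1)} w_i = t^{(i)}` with `w_i = s_{a_i} s_{a_i + 1} ⋯ s_{i-1}` (or `w_i = 1`),
where `a_i` is the entry of `t^{(i+1)}` at the node of `t` containing `i`, and the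
standard expression of `d(t)` is the concatenated word `w_n w_{n-1} ⋯ w_1`. -/

/-- the interpolating tableau `t^{(i)}`. -/
def interT (l n : ℕ) (lam : Fin l → ℕ → ℕ) (T : Node l → ℕ) (i : ℕ) : Node l → ℕ :=
  fun x => if i ≤ T x then T x else initTab l n (restShape l lam T (i - 1)) x

/-- the entry `a_i` of `t^{(i+1)}` at the node of `t` containing `i`
(junk value `i`, giving the empty word, if there is no such node). -/
def aEntry (l n : ℕ) (lam : Fin l → ℕ → ℕ) (T : Node l → ℕ) (i : ℕ) : ℕ :=
  if h : ∃ x, x ∈ diag l lam ∧ T x = i then interT l n lam T (i + 1) h.choose else i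

/-- the word `[a_i, a_i + 1, …, i-1]` of `w_i`. -/
def wordAt (l n : ℕ) (lam : Fin l → ℕ → ℕ) (T : Node l → ℕ) (i : ℕ) : List ℕ :=
  List.range' (aEntry l n lam T i) (i - aEntry l n lam T i)

/-- the standard expression of `d(t)`, as the word `w_n w_{n-1} ⋯ w_1` read left to
right (leftmost letter first). -/
def stdWord (l n : ℕ) (lam : Fin l → ℕ → ℕ) (T : Node l → ℕ) : List ℕ :=
  ((List.range (n + 1)).reverse.map (wordAt l n lam T)).flatten

end Paper
end
namespace Paper

/-- membership in the copy of `S_n` in `Equiv.Perm ℕ`. -/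
def InSymm (n : ℕ) (w : Equiv.Perm ℕ) : Prop :=
  ∀ x : ℕ, x ∉ Finset.Icc 1 n → w x = x

/-- the Coxeter length of `w ∈ S_n`. -/
noncomputable def len (n : ℕ) (w : Equiv.Perm ℕ) : ℕ :=
  sInf {m : ℕ | ∃ L : List ℕ, (∀ r ∈ L, 1 ≤ r ∧ r < n) ∧ L.length = m ∧ w = (L.map sw).prod}

/-- `L` is a reduced expression of `w ∈ S_n` in the generators `s_1,…,s_{n-1}`. -/
def IsReducedWord (n : ℕ) (w : Equiv.Perm ℕ) (L : List ℕ) : Prop :=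
  (∀ r ∈ L, 1 ≤ r ∧ r < n) ∧ w = (L.map sw).prod ∧ L.length = len n w

/-- the Bruhat order on `S_n`: `u ≤ w` iff `u` is the product of a subword of a
reduced expression of `w`. -/
def BruhatLE (n : ℕ) (u w : Equiv.Perm ℕ) : Prop :=
  ∃ L : List ℕ, IsReducedWord n w L ∧ ∃ L' : List ℕ, L'.Sublist L ∧ u = (L'.map sw).prod

end Paper

/-!
Both orders are compared through rank matrices `r_w(N, m) = #{a ∈ [1, N] | w a ≤ m}`.
By Ehresmann's criterion, `u ≤ w` in the Bruhat order iff `r_w ≤ r_u` entrywise: going up a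
reduced word of `w` one letter at a time, the lifting property of `s_r` together with the strong
exchange property shows that every subword product satisfies the inequality; conversely,
induction on the number of inversions of `w`, peeling off a right descent `s_r` and lifting `u`
along it, builds a subword of a reduced word of `w` with product `u`.

Since `t^λ` numbers the nodes in reading order and `u = t^λ · d` increases along rows, at the
position `N` of the `j`-th node of a row the count `r_d(N, m)` is the corresponding partial sum of
`Shape(u|_m)` plus `min(j, ·)` of that row. So `Shape(s|_m) ⊵ Shape(t|_m)` for all `m` says
exactly `r_{d(t)} ≤ r_{d(s)}`.
-/

namespace Paper

section Permutations

lemma sw_apply (r x : ℕ) : sw r x = if x = r then r + 1 else if x = r + 1 then r else x := by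
  simp [sw, Equiv.swap_apply_def]

lemma sw_sw (r x : ℕ) : sw r (sw r x) = x := Equiv.swap_apply_self _ _ _

lemma mul_sw_mul_sw (v : Equiv.Perm ℕ) (r : ℕ) : v * sw r * sw r = v := by
  rw [mul_assoc, sw, Equiv.swap_mul_self, mul_one]

lemma mul_sw_apply_self (v : Equiv.Perm ℕ) (r : ℕ) : (v * sw r) r = v (r + 1) := by
  simp [sw]

lemma mul_sw_apply_succ (v : Equiv.Perm ℕ) (r : ℕ) : (v * sw r) (r + 1) = v r := by
  simp [sw]

lemma sw_lt_sw {r a b : ℕ} (hab : a < b) (hne : ¬(a = r ∧ b = r + 1)) : sw r a < sw r b := by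
  rw [sw_apply, sw_apply]; split_ifs <;> omega

lemma prod_append_sw (M : List ℕ) (r : ℕ) :
    ((M ++ [r]).map sw).prod = (M.map sw).prod * sw r := by
  simp

lemma apply_lt_or_gt_apply_succ (v : Equiv.Perm ℕ) (r : ℕ) :
    v r < v (r + 1) ∨ v (r + 1) < v r :=
  lt_or_gt_of_ne (v.injective.ne (by omega))

lemma InSymm.mul {n : ℕ} {u v : Equiv.Perm ℕ} (hu : InSymm n u) (hv : InSymm n v) :
    InSymm n (u * v) := fun x hx => by
  rw [Equiv.Perm.mul_apply, hv x hx, hu x hx]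

lemma inSymm_sw {n r : ℕ} (hr : 1 ≤ r) (hrn : r < n) : InSymm n (sw r) := fun x hx => by
  rw [Finset.mem_Icc] at hx
  rw [sw_apply, if_neg (by omega), if_neg (by omega)]

lemma InSymm.apply_mem_Icc {n a : ℕ} {v : Equiv.Perm ℕ} (hv : InSymm n v)
    (ha : a ∈ Finset.Icc 1 n) : v a ∈ Finset.Icc 1 n := by
  by_contra h
  rw [v.injective (hv (v a) h)] at h
  exact h ha

end Permutations

section RankCount

def rankCount (v : Equiv.Perm ℕ) (N m : ℕ) : ℕ :=
  ((Finset.Icc 1 N).filter fun a => v a ≤ m).card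

/-- Ehresmann's rank-matrix criterion for the Bruhat order. -/
def RankLE (u w : Equiv.Perm ℕ) : Prop :=
  ∀ N m, rankCount w N m ≤ rankCount u N m

@[simp]
lemma rankCount_zero (v : Equiv.Perm ℕ) (m : ℕ) : rankCount v 0 m = 0 := by
  simp [rankCount]

lemma rankCount_succ (v : Equiv.Perm ℕ) (N m : ℕ) :
    rankCount v (N + 1) m = rankCount v N m + if v (N + 1) ≤ m then 1 else 0 := by
  rw [rankCount, ← Finset.insert_Icc_right_eq_Icc_add_one (by omega), Finset.filter_insert]
  split_ifs
  · rw [Finset.card_insert_of_notMem (by simp)]; rfl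
  · rfl

lemma rankCount_le_left (v : Equiv.Perm ℕ) (N m : ℕ) : rankCount v N m ≤ N :=
  (Finset.card_filter_le _ _).trans (by simp)

lemma rankCount_le_right {v : Equiv.Perm ℕ} (hv : v 0 = 0) (N m : ℕ) :
    rankCount v N m ≤ m := by
  refine (Finset.card_le_card_of_injOn v (fun a ha => ?_) v.injective.injOn).trans
    (Nat.card_Icc 1 m).le
  simp only [Finset.coe_filter, Finset.mem_Icc, Set.mem_ofPred_eq] at ha
  have : v a ≠ 0 := fun h => by have := v.injective (h.trans hv.symm); omega
  simp only [Finset.coe_Icc, Set.mem_Icc]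
  omega

lemma rankCount_one (N m : ℕ) : rankCount 1 N m = min N m := by
  have : (Finset.Icc 1 N).filter (fun a => (1 : Equiv.Perm ℕ) a ≤ m) =
      Finset.Icc 1 (min N m) := by
    ext a
    rw [Finset.mem_filter]
    simp only [Finset.mem_Icc, Equiv.Perm.one_apply]
    omega
  rw [rankCount, this, Nat.card_Icc, Nat.add_sub_cancel]

lemma rankCount_mul_sw_of_ne (v : Equiv.Perm ℕ) {r N : ℕ} (m : ℕ) (hr : 1 ≤ r)
    (hN : N ≠ r) :
    rankCount (v * sw r) N m = rankCount v N m := by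
  have hIcc : ∀ a, sw r a ∈ Finset.Icc 1 N ↔ a ∈ Finset.Icc 1 N := fun a => by
    simp only [Finset.mem_Icc, sw_apply]; split_ifs <;> omega
  unfold rankCount
  refine Finset.card_nbij' (sw r) (sw r) (fun a ha => ?_) (fun a ha => ?_)
    (fun a _ => sw_sw r a) (fun a _ => sw_sw r a)
  all_goals
    rw [Finset.mem_coe, Finset.mem_filter] at ha ⊢
    simp only [Equiv.Perm.mul_apply, sw_sw] at ha ⊢
    exact ⟨(hIcc a).2 ha.1, ha.2⟩

lemma rankCount_mul_sw_self (v : Equiv.Perm ℕ) (q m : ℕ) :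
    rankCount (v * sw (q + 1)) (q + 1) m =
      rankCount v q m + if v (q + 1 + 1) ≤ m then 1 else 0 := by
  rw [rankCount_succ, rankCount_mul_sw_of_ne v m (by omega) (by omega), mul_sw_apply_self]

lemma RankLE.refl (u : Equiv.Perm ℕ) : RankLE u u := fun _ _ => le_rfl

lemma RankLE.mul_sw_of_lt {u w : Equiv.Perm ℕ} {r : ℕ} (h : RankLE u w) (hr : 1 ≤ r)
    (hw : w r < w (r + 1)) : RankLE u (w * sw r) := by
  intro N m
  rcases eq_or_ne N r with rfl | hN
  · obtain ⟨q, rfl⟩ : ∃ q, N = q + 1 := ⟨N - 1, by omega⟩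
    have h₀ := h q m
    have h₁ := h (q + 1) m
    rw [rankCount_mul_sw_self]
    simp only [rankCount_succ] at h₁ ⊢
    split_ifs at h₁ ⊢ <;> omega
  · rw [rankCount_mul_sw_of_ne w m hr hN]
    exact h N m

lemma RankLE.mul_sw_both {u w : Equiv.Perm ℕ} {r : ℕ} (h : RankLE u w) (hr : 1 ≤ r)
    (hu : u r < u (r + 1)) (hw : w r < w (r + 1)) : RankLE (u * sw r) (w * sw r) := by
  intro N m
  rcases eq_or_ne N r with rfl | hN
  · obtain ⟨q, rfl⟩ : ∃ q, N = q + 1 := ⟨N - 1, by omega⟩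
    have h₀ := h q m
    have h₁ := h (q + 1) m
    have h₂ := h (q + 1 + 1) m
    rw [rankCount_mul_sw_self, rankCount_mul_sw_self]
    simp only [rankCount_succ] at h₁ h₂
    split_ifs at h₁ h₂ ⊢ <;> omega
  · rw [rankCount_mul_sw_of_ne w m hr hN, rankCount_mul_sw_of_ne u m hr hN]
    exact h N m

lemma RankLE.lift_of_gt {u w : Equiv.Perm ℕ} {r : ℕ} (h : RankLE u (w * sw r)) (hr : 1 ≤ r)
    (hu : u (r + 1) < u r) (hw : w r < w (r + 1)) : RankLE (u * sw r) w := by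
  intro N m
  rcases eq_or_ne N r with rfl | hN
  · obtain ⟨q, rfl⟩ : ∃ q, N = q + 1 := ⟨N - 1, by omega⟩
    have h₀ := h q m
    have h₁ := h (q + 1) m
    have h₂ := h (q + 1 + 1) m
    rw [rankCount_mul_sw_of_ne w m hr (N := q) (by omega)] at h₀
    rw [rankCount_mul_sw_of_ne w m hr (N := q + 1 + 1) (by omega)] at h₂
    rw [rankCount_mul_sw_self] at h₁ ⊢
    simp only [rankCount_succ] at h₁ h₂ ⊢
    split_ifs at h₁ h₂ ⊢ <;> omega
  · rw [rankCount_mul_sw_of_ne u m hr hN, ← rankCount_mul_sw_of_ne w m hr hN]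
    exact h N m

lemma RankLE.lift_of_lt {u w : Equiv.Perm ℕ} {r : ℕ} (h : RankLE u (w * sw r)) (hr : 1 ≤ r)
    (hu : u r < u (r + 1)) (hw : w r < w (r + 1)) : RankLE u w := by
  intro N m
  rcases eq_or_ne N r with rfl | hN
  · obtain ⟨q, rfl⟩ : ∃ q, N = q + 1 := ⟨N - 1, by omega⟩
    have h₀ := h q m
    have h₁ := h (q + 1) m
    have h₂ := h (q + 1 + 1) m
    rw [rankCount_mul_sw_of_ne w m hr (N := q) (by omega)] at h₀
    rw [rankCount_mul_sw_of_ne w m hr (N := q + 1 + 1) (by omega)] at h₂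
    rw [rankCount_mul_sw_self] at h₁
    simp only [rankCount_succ] at h₁ h₂ ⊢
    split_ifs at h₁ h₂ ⊢ <;> omega
  · rw [← rankCount_mul_sw_of_ne w m hr hN]
    exact h N m

end RankCount

section Inversions

variable {n : ℕ}

def inversions (n : ℕ) (v : Equiv.Perm ℕ) : Finset (ℕ × ℕ) :=
  (Finset.Icc 1 n ×ˢ Finset.Icc 1 n).filter fun p => p.1 < p.2 ∧ v p.2 < v p.1

lemma mem_inversions {v : Equiv.Perm ℕ} {p : ℕ × ℕ} :
    p ∈ inversions n v ↔
      (1 ≤ p.1 ∧ p.1 ≤ n) ∧ (1 ≤ p.2 ∧ p.2 ≤ n) ∧ p.1 < p.2 ∧ v p.2 < v p.1 := by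
  rw [inversions, Finset.mem_filter, Finset.mem_product, Finset.mem_Icc, Finset.mem_Icc, and_assoc]

lemma inversions_one : inversions n 1 = ∅ := by
  ext p
  simp only [mem_inversions, Equiv.Perm.one_apply, Finset.notMem_empty, iff_false]
  omega

lemma swap_mem_inversions_erase {v : Equiv.Perm ℕ} {r : ℕ} {p : ℕ × ℕ} (hr : 1 ≤ r)
    (hrn : r < n) (hp : p ∈ (inversions n (v * sw r)).erase (r, r + 1)) :
    (sw r p.1, sw r p.2) ∈ (inversions n v).erase (r, r + 1) := by
  rw [Finset.mem_erase, mem_inversions] at hp ⊢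
  obtain ⟨hne, h₁, h₂, hlt, hv⟩ := hp
  have hne' : ¬(p.1 = r ∧ p.2 = r + 1) := fun ⟨e₁, e₂⟩ => hne (Prod.ext e₁ e₂)
  refine ⟨fun h => hne' ?_, ?_, ?_, sw_lt_sw hlt hne', hv⟩
  · simp only [Prod.ext_iff, sw_apply] at h
    split_ifs at h <;> omega
  all_goals simp only [sw_apply]; split_ifs <;> omega

lemma card_inversions_mul_sw_erase (v : Equiv.Perm ℕ) {r : ℕ} (hr : 1 ≤ r) (hrn : r < n) :
    ((inversions n (v * sw r)).erase (r, r + 1)).card =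
      ((inversions n v).erase (r, r + 1)).card := by
  refine Finset.card_nbij' (fun p => (sw r p.1, sw r p.2)) (fun p => (sw r p.1, sw r p.2))
    (fun p hp => swap_mem_inversions_erase hr hrn hp) (fun p hp => ?_)
    (fun p _ => by simp [sw_sw]) (fun p _ => by simp [sw_sw])
  rw [← mul_sw_mul_sw v r] at hp
  exact swap_mem_inversions_erase hr hrn hp

lemma card_inversions_mul_sw_of_lt {v : Equiv.Perm ℕ} {r : ℕ} (hr : 1 ≤ r) (hrn : r < n)
    (hv : v r < v (r + 1)) : (inversions n (v * sw r)).card = (inversions n v).card + 1 := by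
  have hmem : (r, r + 1) ∈ inversions n (v * sw r) := by
    simp only [mem_inversions, mul_sw_apply_self, mul_sw_apply_succ]
    omega
  have hnotMem : (r, r + 1) ∉ inversions n v := by
    simp only [mem_inversions]
    omega
  rw [← Finset.card_erase_add_one hmem, card_inversions_mul_sw_erase v hr hrn,
    Finset.erase_eq_of_notMem hnotMem]

lemma card_inversions_mul_sw_of_gt {v : Equiv.Perm ℕ} {r : ℕ} (hr : 1 ≤ r) (hrn : r < n)
    (hv : v (r + 1) < v r) : (inversions n v).card = (inversions n (v * sw r)).card + 1 := by
  have := card_inversions_mul_sw_of_lt (v := v * sw r) hr hrn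
    (by rwa [mul_sw_apply_self, mul_sw_apply_succ])
  rwa [mul_sw_mul_sw] at this

lemma card_inversions_mul_sw_le (v : Equiv.Perm ℕ) {r : ℕ} (hr : 1 ≤ r) (hrn : r < n) :
    (inversions n (v * sw r)).card ≤ (inversions n v).card + 1 := by
  rcases apply_lt_or_gt_apply_succ v r with hv | hv
  · exact (card_inversions_mul_sw_of_lt hr hrn hv).le
  · have := card_inversions_mul_sw_of_gt hr hrn hv
    omega

lemma eq_one_of_forall_lt_apply_succ {v : Equiv.Perm ℕ} (hv : InSymm n v)
    (hasc : ∀ r, 1 ≤ r → r < n → v r < v (r + 1)) : v = 1 := by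
  have hwin : ∀ a, 1 ≤ a → a ≤ n → 1 ≤ v a ∧ v a ≤ n := fun a h₁ h₂ => by
    simpa using hv.apply_mem_Icc (Finset.mem_Icc.2 ⟨h₁, h₂⟩)
  have hlower : ∀ a, 1 ≤ a → a ≤ n → a ≤ v a := by
    intro a h₁ h₂
    induction a, h₁ using Nat.le_induction with
    | base => exact (hwin 1 le_rfl h₂).1
    | succ a ha ih => have := hasc a ha (by omega); have := ih (by omega); omega
  have hupper : ∀ d a, 1 ≤ a → a + d = n → v a ≤ a := by
    intro d
    induction d with
    | zero => intro a h₁ h₂; exact (hwin a h₁ (by omega)).2.trans h₂.ge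
    | succ d ih =>
      intro a h₁ h₂
      have := hasc a h₁ (by omega)
      have := ih (a + 1) (by omega) (by omega)
      omega
  ext a
  by_cases ha : a ∈ Finset.Icc 1 n
  · rw [Finset.mem_Icc] at ha
    have := hlower a ha.1 ha.2
    have := hupper (n - a) a ha.1 (by omega)
    simp only [Equiv.Perm.one_apply]
    omega
  · exact hv a ha

lemma exists_descent {v : Equiv.Perm ℕ} (hv : InSymm n v) (h1 : v ≠ 1) :
    ∃ r, 1 ≤ r ∧ r < n ∧ v (r + 1) < v r := by
  by_contra! h
  exact h1 (eq_one_of_forall_lt_apply_succ hv fun r hr hrn =>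
    (apply_lt_or_gt_apply_succ v r).resolve_right (h r hr hrn).not_gt)

lemma eq_one_of_inversions_eq_empty {v : Equiv.Perm ℕ} (hv : InSymm n v)
    (h : inversions n v = ∅) : v = 1 := by
  by_contra h1
  obtain ⟨r, hr, hrn, hdesc⟩ := exists_descent hv h1
  have : (r, r + 1) ∈ inversions n v := by
    simp only [mem_inversions]
    omega
  simp [h] at this

end Inversions

section Length

variable {n : ℕ}

lemma card_inversions_prod_le (L : List ℕ) (hL : ∀ r ∈ L, 1 ≤ r ∧ r < n) :
    (inversions n (L.map sw).prod).card ≤ L.length := by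
  induction L using List.reverseRecOn with
  | nil => simp [inversions_one]
  | append_singleton M r ih =>
    have hr := hL r (by simp)
    have := ih fun r' h' => hL r' (by simp [h'])
    have := card_inversions_mul_sw_le (n := n) (M.map sw).prod hr.1 hr.2
    rw [prod_append_sw, List.length_append, List.length_singleton]
    omega

lemma exists_word_length_eq_card_inversions {v : Equiv.Perm ℕ} (hv : InSymm n v) :
    ∃ L : List ℕ, (∀ r ∈ L, 1 ≤ r ∧ r < n) ∧ L.length = (inversions n v).card ∧
      v = (L.map sw).prod := by
  generalize hk : (inversions n v).card = k
  induction k generalizing v with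
  | zero =>
    exact ⟨[], by simp, rfl, eq_one_of_inversions_eq_empty hv (Finset.card_eq_zero.1 hk)⟩
  | succ k ih =>
    obtain ⟨r, hr, hrn, hdesc⟩ := exists_descent hv (by rintro rfl; simp [inversions_one] at hk)
    have hcard := card_inversions_mul_sw_of_gt hr hrn hdesc
    obtain ⟨L, hL, hlen, hprod⟩ := ih (hv.mul (inSymm_sw hr hrn)) (by omega)
    exact ⟨L ++ [r], List.forall_mem_append.2 ⟨hL, List.forall_mem_singleton.2 ⟨hr, hrn⟩⟩,
      by simp [hlen], by rw [prod_append_sw, ← hprod, mul_sw_mul_sw]⟩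

lemma len_eq_card_inversions {v : Equiv.Perm ℕ} (hv : InSymm n v) :
    len n v = (inversions n v).card := by
  obtain ⟨L, hL, hlen, hprod⟩ := exists_word_length_eq_card_inversions hv
  refine le_antisymm (Nat.sInf_le ⟨L, hL, hlen, hprod⟩) ?_
  refine le_csInf ⟨_, L, hL, hlen, hprod⟩ fun m ⟨L', hL', hm, hprod'⟩ => ?_
  rw [← hm, hprod']
  exact card_inversions_prod_le L' hL'

lemma reduced_append_singleton {M : List ℕ} {r : ℕ}
    (hL : ∀ r' ∈ M ++ [r], 1 ≤ r' ∧ r' < n)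
    (hred : (M ++ [r]).length = (inversions n ((M ++ [r]).map sw).prod).card) :
    M.length = (inversions n (M.map sw).prod).card ∧
      (M.map sw).prod r < (M.map sw).prod (r + 1) := by
  have hr := hL r (by simp)
  have hle := card_inversions_prod_le M fun r' h' => hL r' (by simp [h'])
  rw [prod_append_sw, List.length_append, List.length_singleton] at hred
  rcases apply_lt_or_gt_apply_succ (M.map sw).prod r with hasc | hdesc
  · have := card_inversions_mul_sw_of_lt hr.1 hr.2 hasc
    exact ⟨by omega, hasc⟩
  · have := card_inversions_mul_sw_of_gt hr.1 hr.2 hdesc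
    omega

end Length

section Bruhat

variable {n : ℕ}

/-- The strong exchange property. -/
lemma exists_eraseIdx_of_mul_swap (M : List ℕ) {p q : ℕ} (hpq : p < q)
    (hinv : (M.map sw).prod q < (M.map sw).prod p) :
    ∃ i < M.length, (M.map sw).prod * Equiv.swap p q = ((M.eraseIdx i).map sw).prod := by
  induction M using List.reverseRecOn generalizing p q with
  | nil => simp at hinv; omega
  | append_singleton M r ih =>
    rw [prod_append_sw] at hinv ⊢
    by_cases hpr : p = r ∧ q = r + 1
    · obtain ⟨rfl, rfl⟩ := hpr
      refine ⟨M.length, by simp, ?_⟩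
      rw [List.eraseIdx_append_of_length_le le_rfl, Nat.sub_self, List.eraseIdx_cons_zero,
        List.append_nil, ← sw, mul_sw_mul_sw]
    · obtain ⟨i, hi, hprod⟩ := ih (sw_lt_sw hpq hpr) hinv
      refine ⟨i, by simp; omega, ?_⟩
      rw [mul_assoc, sw, Equiv.mul_swap_eq_swap_mul, ← sw, ← mul_assoc, hprod,
        List.eraseIdx_append_of_lt_length hi, prod_append_sw]

lemma rankLE_of_sublist {L : List ℕ} (hL : ∀ r ∈ L, 1 ≤ r ∧ r < n)
    (hred : L.length = (inversions n (L.map sw).prod).card) {L' : List ℕ} (hsub : L'.Sublist L) :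
    RankLE (L'.map sw).prod (L.map sw).prod := by
  induction L using List.reverseRecOn generalizing L' with
  | nil =>
    rw [List.sublist_nil.1 hsub]
    exact RankLE.refl _
  | append_singleton M r ih =>
    obtain ⟨hMred, hasc⟩ := reduced_append_singleton hL hred
    have hr := (hL r (by simp)).1
    have ih := @ih (fun r' h' => hL r' (by simp [h'])) hMred
    rw [prod_append_sw]
    obtain ⟨M', t, rfl, hM', ht⟩ := List.sublist_append_iff.1 hsub
    rcases List.sublist_singleton.1 ht with rfl | rfl
    · rw [List.append_nil]
      exact (ih hM').mul_sw_of_lt hr hasc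
    · rw [prod_append_sw]
      rcases apply_lt_or_gt_apply_succ (M'.map sw).prod r with hasc' | hdesc'
      · exact (ih hM').mul_sw_both hr hasc' hasc
      · obtain ⟨i, -, hprod⟩ := exists_eraseIdx_of_mul_swap M' (Nat.lt_succ_self r) hdesc'
        rw [← sw] at hprod
        rw [hprod]
        exact (ih ((List.eraseIdx_sublist M' i).trans hM')).mul_sw_of_lt hr hasc

lemma isReducedWord_iff {w : Equiv.Perm ℕ} {L : List ℕ} (hw : InSymm n w) :
    IsReducedWord n w L ↔
      (∀ r ∈ L, 1 ≤ r ∧ r < n) ∧ w = (L.map sw).prod ∧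
        L.length = (inversions n w).card := by
  rw [IsReducedWord, len_eq_card_inversions hw]

lemma rankLE_of_bruhatLE {u w : Equiv.Perm ℕ} (hw : InSymm n w) (h : BruhatLE n u w) :
    RankLE u w := by
  obtain ⟨L, hred, L', hsub, rfl⟩ := h
  obtain ⟨hL, rfl, hlen⟩ := (isReducedWord_iff hw).1 hred
  exact rankLE_of_sublist hL hlen hsub

lemma eq_one_of_rankLE_one {u : Equiv.Perm ℕ} (hu : u 0 = 0) (h : RankLE u 1) : u = 1 := by
  ext a
  obtain rfl | ⟨b, rfl⟩ : a = 0 ∨ ∃ b, a = b + 1 := by cases a <;> simp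
  · simpa using hu
  have h₁ := h (b + 1) (b + 1)
  have h₂ := h b b
  have h₃ := rankCount_le_left u b (b + 1)
  have h₄ := rankCount_le_right hu (b + 1) b
  rw [rankCount_one] at h₁ h₂
  rw [rankCount_succ] at h₁ h₄
  simp only [Equiv.Perm.one_apply]
  split_ifs at h₁ h₄ <;> omega

lemma RankLE.exists_lift {u w : Equiv.Perm ℕ} {r : ℕ} (h : RankLE u w) (hu : InSymm n u)
    (hr : 1 ≤ r) (hrn : r < n) (hdesc : w (r + 1) < w r) :
    ∃ u', InSymm n u' ∧ RankLE u' (w * sw r) ∧ (u = u' ∨ u = u' * sw r) := by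
  have hasc : (w * sw r) r < (w * sw r) (r + 1) := by
    rwa [mul_sw_apply_self, mul_sw_apply_succ]
  rw [← mul_sw_mul_sw w r] at h
  rcases apply_lt_or_gt_apply_succ u r with hu_asc | hu_desc
  · exact ⟨u, hu, h.lift_of_lt hr hu_asc hasc, Or.inl rfl⟩
  · exact ⟨u * sw r, hu.mul (inSymm_sw hr hrn), h.lift_of_gt hr hu_desc hasc,
      Or.inr (mul_sw_mul_sw u r).symm⟩

lemma bruhatLE_of_rankLE {u w : Equiv.Perm ℕ} (hu : InSymm n u) (hw : InSymm n w)
    (h : RankLE u w) : BruhatLE n u w := by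
  generalize hk : (inversions n w).card = k
  induction k generalizing u w with
  | zero =>
    obtain rfl := eq_one_of_inversions_eq_empty hw (Finset.card_eq_zero.1 hk)
    obtain rfl := eq_one_of_rankLE_one (hu 0 (by simp)) h
    exact ⟨[], (isReducedWord_iff hw).2 ⟨by simp, rfl, by simp [inversions_one]⟩, [],
      List.Sublist.slnil, rfl⟩
  | succ k ih =>
    obtain ⟨r, hr, hrn, hdesc⟩ := exists_descent hw (by rintro rfl; simp [inversions_one] at hk)
    have hcard := card_inversions_mul_sw_of_gt hr hrn hdesc
    have hw' : InSymm n (w * sw r) := hw.mul (inSymm_sw hr hrn)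
    obtain ⟨u', hu', hlift, hu'u⟩ := h.exists_lift hu hr hrn hdesc
    obtain ⟨L, hred, L', hsub, rfl⟩ := ih hu' hw' hlift (by omega)
    obtain ⟨hL, hprod, hlen⟩ := (isReducedWord_iff hw').1 hred
    refine ⟨L ++ [r], (isReducedWord_iff hw).2 ⟨?_, ?_, ?_⟩, ?_⟩
    · exact List.forall_mem_append.2 ⟨hL, List.forall_mem_singleton.2 ⟨hr, hrn⟩⟩
    · rw [prod_append_sw, ← hprod, mul_sw_mul_sw]
    · rw [List.length_append, List.length_singleton, hlen]
      omega
    · rcases hu'u with rfl | rfl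
      · exact ⟨L', hsub.trans (List.sublist_append_left L [r]), rfl⟩
      · exact ⟨L' ++ [r], hsub.append (List.Sublist.refl _), (prod_append_sw L' r).symm⟩

lemma bruhatLE_iff_rankLE {u w : Equiv.Perm ℕ} (hu : InSymm n u) (hw : InSymm n w) :
    BruhatLE n u w ↔ RankLE u w :=
  ⟨rankLE_of_bruhatLE hw, bruhatLE_of_rankLE hu hw⟩

end Bruhat

section ReadingOrder

variable {l n : ℕ}

lemma partialSum_succ (lam : Fin l → ℕ → ℕ) (c : Fin l) (k : ℕ) :
    partialSum l n lam c (k + 1) = partialSum l n lam c k + lam c k := by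
  rw [partialSum, partialSum, Finset.sum_range_succ, add_assoc]

lemma partialSum_first (lam : Fin l → ℕ → ℕ) (h : 0 < l) :
    partialSum l n lam ⟨0, h⟩ 0 = 0 := by
  simp [partialSum, Fin.lt_def]

lemma partialSum_next (lam : Fin l → ℕ → ℕ) (i : ℕ) (h : i + 1 < l) :
    partialSum l n lam ⟨i + 1, h⟩ 0 = partialSum l n lam ⟨i, by omega⟩ n := by
  have hfilter : Finset.univ.filter (fun c : Fin l => c < ⟨i + 1, h⟩) =
      insert ⟨i, by omega⟩ (Finset.univ.filter fun c : Fin l => c < ⟨i, by omega⟩) := by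
    ext c
    simp only [Finset.mem_filter, Finset.mem_univ, true_and, Finset.mem_insert, Fin.lt_def,
      Fin.ext_iff]
    omega
  rw [partialSum, partialSum, hfilter, Finset.sum_insert (by simp), compSize]
  simp only [Finset.range_zero, Finset.sum_empty, add_zero]
  ring

lemma partialSum_last {lam : Fin l → ℕ → ℕ} (hlam : IsMultipartition l n lam) (h : 0 < l) :
    partialSum l n lam ⟨l - 1, by omega⟩ n = n := by
  have huniv : (Finset.univ : Finset (Fin l)) = insert ⟨l - 1, by omega⟩
      (Finset.univ.filter fun c : Fin l => c < ⟨l - 1, by omega⟩) := by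
    ext c
    simp only [Finset.mem_univ, Finset.mem_filter, true_and, Finset.mem_insert, Fin.lt_def,
      Fin.ext_iff, true_iff]
    omega
  calc partialSum l n lam ⟨l - 1, by omega⟩ n = ∑ c, compSize l n lam c := by
        rw [huniv, Finset.sum_insert (by simp), partialSum, add_comm]
        rfl
    _ = n := hlam.2.2

theorem row_induction {P : Fin l → ℕ → Prop} (first : ∀ h : 0 < l, P ⟨0, h⟩ 0)
    (next : ∀ i (h : i + 1 < l), P ⟨i, by omega⟩ n → P ⟨i + 1, h⟩ 0)
    (succ : ∀ c k, P c k → P c (k + 1)) (c : Fin l) (k : ℕ) : P c k := by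
  have along_row : ∀ c k, P c 0 → P c k := fun c k h0 => by
    induction k with
    | zero => exact h0
    | succ k ih => exact succ c k ih
  obtain ⟨i, hi⟩ := c
  refine along_row _ k ?_
  induction i with
  | zero => exact first hi
  | succ i ih => exact next i hi (along_row _ n (ih (by omega)))

lemma exists_eq_partialSum_add (lam : Fin l → ℕ → ℕ) (c : Fin l) (k : ℕ) {N : ℕ}
    (hN : N ≤ partialSum l n lam c k) :
    ∃ c' k' j, j ≤ lam c' k' ∧ N = partialSum l n lam c' k' + j := by
  induction c, k using row_induction (n := n) generalizing N with
  | first h =>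
    exact ⟨⟨0, h⟩, 0, 0, Nat.zero_le _, by rw [partialSum_first] at hN ⊢; omega⟩
  | next i h ih => exact ih (by rwa [partialSum_next] at hN)
  | succ c k ih =>
    rw [partialSum_succ] at hN
    by_cases hle : N ≤ partialSum l n lam c k
    · exact ih hle
    · exact ⟨c, k, N - partialSum l n lam c k, by omega, by omega⟩

lemma initTab_of_lt {lam : Fin l → ℕ → ℕ} {c : Fin l} {k j : ℕ} (hj : j < lam c k) :
    initTab l n lam (c, k, j) = partialSum l n lam c k + j + 1 := by
  simp only [initTab, partialSum, if_pos hj]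

end ReadingOrder

section RowStandard

variable {l n : ℕ} {lam : Fin l → ℕ → ℕ} {T : Node l → ℕ}

def RowIncreasing (l : ℕ) (lam : Fin l → ℕ → ℕ) (T : Node l → ℕ) : Prop :=
  ∀ (c : Fin l) (r j : ℕ), j + 1 < lam c r → T (c, r, j) < T (c, r, j + 1)

lemma RowColIncreasing.rowIncreasing (hT : RowColIncreasing l lam T) : RowIncreasing l lam T :=
  hT.1

lemma restShape_le (T : Node l → ℕ) (m : ℕ) (c : Fin l) (k : ℕ) :
    restShape l lam T m c k ≤ lam c k :=
  (Finset.card_filter_le _ _).trans (Finset.card_range _).le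

lemma RowIncreasing.apply_le_apply (hrow : RowIncreasing l lam T)
    {c : Fin l} {k i j : ℕ} (hij : i ≤ j) (hj : j < lam c k) : T (c, k, i) ≤ T (c, k, j) := by
  induction j, hij using Nat.le_induction with
  | base => exact le_rfl
  | succ j hij ih => exact (ih (by omega)).trans (hrow c k j hj).le

lemma RowIncreasing.lt_restShape_iff (hrow : RowIncreasing l lam T)
    {m : ℕ} {c : Fin l} {k j : ℕ} (hj : j < lam c k) :
    j < restShape l lam T m c k ↔ T (c, k, j) ≤ m := by
  set row := (Finset.range (lam c k)).filter fun i => T (c, k, i) ≤ m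
  change j < row.card ↔ _
  constructor
  · intro hlt
    by_contra hgt
    have hsub : row ⊆ Finset.range j := fun i hi => by
      rw [Finset.mem_filter, Finset.mem_range] at hi
      rw [Finset.mem_range]
      by_contra hji
      exact hgt ((hrow.apply_le_apply (not_lt.1 hji) hi.1).trans hi.2)
    exact hlt.not_ge (by simpa using Finset.card_le_card hsub)
  · intro hle
    have hsub : Finset.range (j + 1) ⊆ row := fun i hi => by
      rw [Finset.mem_range] at hi
      rw [Finset.mem_filter, Finset.mem_range]
      exact ⟨by omega, (hrow.apply_le_apply (by omega) hj).trans hle⟩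
    simpa using Finset.card_le_card hsub

end RowStandard

section RankOfTableau

variable {l n : ℕ} {lam : Fin l → ℕ → ℕ} {T : Node l → ℕ} {d : Equiv.Perm ℕ}

/-- Along a row of `t^λ`, the entries sent into `[1, m]` by `d` are exactly the first
`restShape` ones, since `t^λ · d` is row increasing. -/
lemma rankCount_partialSum_add_of_eq (hTd : actT l (initTab l n lam) d = T)
    (hrow : RowIncreasing l lam T) {m : ℕ} {c : Fin l} {k : ℕ}
    (h0 : rankCount d (partialSum l n lam c k) m = partialSum l n (restShape l lam T m) c k)
    {j : ℕ} (hj : j ≤ lam c k) :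
    rankCount d (partialSum l n lam c k + j) m =
      partialSum l n (restShape l lam T m) c k + min j (restShape l lam T m c k) := by
  subst hTd
  induction j with
  | zero => simpa using h0
  | succ j ih =>
    have hlt : j < restShape l lam (actT l (initTab l n lam) d) m c k ↔
        d (initTab l n lam (c, k, j)) ≤ m :=
      hrow.lt_restShape_iff (by omega)
    rw [← add_assoc, rankCount_succ, ih (by omega), ← initTab_of_lt (by omega)]
    split_ifs at hlt ⊢ <;> omega

lemma rankCount_partialSum (hTd : actT l (initTab l n lam) d = T) (hrow : RowIncreasing l lam T)
    (m : ℕ) (c : Fin l) (k : ℕ) :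
    rankCount d (partialSum l n lam c k) m = partialSum l n (restShape l lam T m) c k := by
  induction c, k using row_induction (n := n) with
  | first h => simp [partialSum_first]
  | next i h ih => rw [partialSum_next, partialSum_next, ih]
  | succ c k ih =>
    rw [partialSum_succ, partialSum_succ, rankCount_partialSum_add_of_eq hTd hrow ih le_rfl,
      min_eq_right (restShape_le T m c k)]

lemma rankCount_partialSum_add (hTd : actT l (initTab l n lam) d = T)
    (hrow : RowIncreasing l lam T) (m : ℕ) {c : Fin l} {k j : ℕ} (hj : j ≤ lam c k) :
    rankCount d (partialSum l n lam c k + j) m =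
      partialSum l n (restShape l lam T m) c k + min j (restShape l lam T m c k) :=
  rankCount_partialSum_add_of_eq hTd hrow (rankCount_partialSum hTd hrow m c k) hj

end RankOfTableau

section Dominance

variable {l n : ℕ} {lam : Fin l → ℕ → ℕ} {S T : Node l → ℕ} {dS dT : Equiv.Perm ℕ}

lemma rankLE_of_forall_le {u w : Equiv.Perm ℕ} (hu : InSymm n u) (hw : InSymm n w)
    (h : ∀ N ≤ n, ∀ m, rankCount w N m ≤ rankCount u N m) : RankLE u w := by
  intro N m
  induction N with
  | zero => simp
  | succ N ih =>
    rcases le_or_gt (N + 1) n with hN | hN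
    · exact h _ hN m
    · have hout : N + 1 ∉ Finset.Icc 1 n := by rw [Finset.mem_Icc]; omega
      rw [rankCount_succ, rankCount_succ, hu _ hout, hw _ hout]
      omega

lemma tabDom_of_rankLE (hSd : actT l (initTab l n lam) dS = S)
    (hTd : actT l (initTab l n lam) dT = T) (hS : RowIncreasing l lam S)
    (hT : RowIncreasing l lam T) (h : RankLE dS dT) : TabDom l n lam S T := fun m c k => by
  rw [← rankCount_partialSum hSd hS, ← rankCount_partialSum hTd hT]
  exact h _ m

lemma rankLE_of_tabDom (hlam : IsMultipartition l n lam) (hdS : InSymm n dS) (hdT : InSymm n dT)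
    (hSd : actT l (initTab l n lam) dS = S) (hTd : actT l (initTab l n lam) dT = T)
    (hS : RowIncreasing l lam S) (hT : RowIncreasing l lam T) (h : TabDom l n lam S T) :
    RankLE dS dT := by
  refine rankLE_of_forall_le hdS hdT fun N hN m => ?_
  rcases Nat.eq_zero_or_pos l with rfl | hl
  · have hn : n = 0 := by simpa using hlam.2.2.symm
    obtain rfl : N = 0 := by omega
    simp
  obtain ⟨c, k, j, hj, rfl⟩ :=
    exists_eq_partialSum_add lam ⟨l - 1, by omega⟩ n (hN.trans (partialSum_last hlam hl).ge)
  have h₀ := h m c k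
  have h₁ := h m c (k + 1)
  rw [partialSum_succ, partialSum_succ] at h₁
  rw [rankCount_partialSum_add hSd hS m hj, rankCount_partialSum_add hTd hT m hj]
  omega

end Dominance

theorem statement5 (l n : ℕ) (lam : Fin l → ℕ → ℕ) (hlam : IsMultipartition l n lam)
    (S T : Node l → ℕ) (hS : IsStdTab l n lam S) (hT : IsStdTab l n lam T)
    (dS dT : Equiv.Perm ℕ) (hdS : InSymm n dS) (hdT : InSymm n dT)
    (hSd : actT l (initTab l n lam) dS = S) (hTd : actT l (initTab l n lam) dT = T) :
    TabDom l n lam S T ↔ BruhatLE n dS dT := by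
  have hSrow := hS.2.2.rowIncreasing
  have hTrow := hT.2.2.rowIncreasing
  rw [bruhatLE_iff_rankLE hdS hdT]
  exact ⟨rankLE_of_tabDom hlam hdS hdT hSd hTd hSrow hTrow,
    tabDom_of_rankLE hSd hTd hSrow hTrow⟩

end Paper
end

section
/- Let t be a standard λ-tableau with standard expression d(t) = s_{r_1}···s_{r_m}. Then for every 1 ≤ k ≤ m, the tableau t^λ · s_{r_1} s_{r_2} ··· s_{r_k} is a standard λ-tableau. -/
namespace Paper
noncomputable section
open scoped Classical


/-- the cycle sending `a ↦ j`, `v ↦ v-1` for `a < v ≤ j`, fixing everything else. -/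
def cycVal (a j v : ℕ) : ℕ := if v = a then j else if a < v ∧ v ≤ j then v - 1 else v

/-- inverse of `cycVal a j`. -/
def cycInv (a j w : ℕ) : ℕ := if w = j then a else if a ≤ w ∧ w < j then w + 1 else w

theorem cyc_id (a v : ℕ) : cycVal a a v = v := by
  unfold cycVal; split_ifs <;> omega

theorem cycInv_cyc (a j v : ℕ) (haj : a ≤ j) : cycInv a j (cycVal a j v) = v := by
  unfold cycVal cycInv; split_ifs <;> omega

theorem cyc_cycInv (a j w : ℕ) (haj : a ≤ j) : cycVal a j (cycInv a j w) = w := by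
  unfold cycVal cycInv; split_ifs <;> omega

theorem cyc_inj (a j : ℕ) (haj : a ≤ j) {v v' : ℕ} (h : cycVal a j v = cycVal a j v') :
    v = v' := by
  have h1 := cycInv_cyc a j v haj
  have h2 := cycInv_cyc a j v' haj
  rw [h] at h1; omega

theorem cyc_pos (a j v : ℕ) (ha : 1 ≤ a) (haj : a ≤ j) (hv : 1 ≤ v) :
    1 ≤ cycVal a j v := by
  unfold cycVal; split_ifs <;> omega

theorem cyc_le (a j i v : ℕ) (hj : j ≤ i) (hv : v ≤ i) : cycVal a j v ≤ i := by
  unfold cycVal; split_ifs <;> omega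

theorem cycInv_pos (a j w : ℕ) (ha : 1 ≤ a) (hw : 1 ≤ w) : 1 ≤ cycInv a j w := by
  unfold cycInv; split_ifs <;> omega

theorem cycInv_le (a j i w : ℕ) (ha : a ≤ j) (hj : j ≤ i) (hw : w ≤ i) :
    cycInv a j w ≤ i := by
  unfold cycInv; split_ifs <;> omega

theorem cyc_mono (a j v v' : ℕ) (haj : a ≤ j) (hv : v ≠ a) (hvv : v < v') :
    cycVal a j v < cycVal a j v' := by
  unfold cycVal; split_ifs <;> omega

theorem cyc_swap (a j v : ℕ) (ha : 1 ≤ a) (haj : a ≤ j) :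
    sw j (cycVal a j v) = cycVal a (j + 1) v := by
  unfold sw cycVal
  rcases eq_or_ne v a with rfl | hva
  · simp [Equiv.swap_apply_left]
  · rw [if_neg hva, if_neg hva]
    by_cases h1 : a < v ∧ v ≤ j
    · rw [if_pos h1, if_pos ⟨h1.1, by omega⟩]
      apply Equiv.swap_apply_of_ne_of_ne <;> omega
    · rw [if_neg h1]
      by_cases h2 : v = j + 1
      · subst h2
        rw [if_pos ⟨by omega, le_rfl⟩, Equiv.swap_apply_right]; omega
      · rw [if_neg (by omega)]
        apply Equiv.swap_apply_of_ne_of_ne <;> omega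

theorem cyc_fix_of_big (a j v : ℕ) (haj : a ≤ j) (h : j < v) : cycVal a j v = v := by
  unfold cycVal; split_ifs <;> omega

theorem cyc_zero (a j : ℕ) (ha : 1 ≤ a) : cycVal a j 0 = 0 := by
  unfold cycVal; split_ifs <;> omega


open Finset

section InitTab
variable {l n : ℕ} {m : Fin l → ℕ → ℕ}

theorem mem_diagP {x : Node l} : x ∈ diag l m ↔ x.2.2 < m x.1 x.2.1 := Iff.rfl

/-- value on the diagram -/
theorem initTab_eq {c : Fin l} {r j : ℕ} (h : j < m c r) :
    initTab l n m (c, r, j) =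
      (∑ c' ∈ Finset.univ.filter (fun c' : Fin l => c' < c), compSize l n m c') +
        (∑ r' ∈ Finset.range r, m c r') + j + 1 := by
  unfold initTab; exact if_pos h

theorem initTab_eq_zero {x : Node l} (h : x ∉ diag l m) : initTab l n m x = 0 := by
  unfold initTab; exact if_neg h

theorem init_pos {c : Fin l} {r j : ℕ} (h : j < m c r) : 1 ≤ initTab l n m (c, r, j) := by
  rw [initTab_eq h]; omega

/-- row partial sums bound: `P c r + j + 1 ≤ compSize c` -/
theorem row_le_comp (hsupp : ∀ c r, m c r ≠ 0 → r < n) {c : Fin l} {r j : ℕ}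
    (h : j < m c r) :
    (∑ r' ∈ Finset.range r, m c r') + j + 1 ≤ compSize l n m c := by
  have hr : r < n := hsupp c r (by omega)
  have h1 : (∑ r' ∈ Finset.range r, m c r') + j + 1 ≤ ∑ r' ∈ Finset.range (r + 1), m c r' := by
    rw [Finset.sum_range_succ]; omega
  have h2 : (∑ r' ∈ Finset.range (r + 1), m c r') ≤ ∑ r' ∈ Finset.range n, m c r' :=
    Finset.sum_le_sum_of_subset (Finset.range_subset_range.2 (by omega))
  exact h1.trans h2

theorem comp_le_S {c c' : Fin l} (h : c < c') :
    (∑ c'' ∈ Finset.univ.filter (fun c'' : Fin l => c'' < c), compSize l n m c'') +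
      compSize l n m c ≤
    (∑ c'' ∈ Finset.univ.filter (fun c'' : Fin l => c'' < c'), compSize l n m c'') := by
  have hc : c ∉ Finset.univ.filter (fun c'' : Fin l => c'' < c) := by simp
  have hsub : insert c (Finset.univ.filter (fun c'' : Fin l => c'' < c)) ⊆
      Finset.univ.filter (fun c'' : Fin l => c'' < c') := by
    intro z hz
    simp only [Finset.mem_insert, Finset.mem_filter, Finset.mem_univ, true_and] at hz ⊢
    rcases hz with rfl | hz
    · exact h
    · exact hz.trans h
  calc (∑ c'' ∈ Finset.univ.filter (fun c'' : Fin l => c'' < c), compSize l n m c'') +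
        compSize l n m c
      = ∑ c'' ∈ insert c (Finset.univ.filter (fun c'' : Fin l => c'' < c)),
          compSize l n m c'' := by rw [Finset.sum_insert hc]; omega
    _ ≤ _ := Finset.sum_le_sum_of_subset hsub

theorem init_le_total (hsupp : ∀ c r, m c r ≠ 0 → r < n) {c : Fin l} {r j : ℕ}
    (h : j < m c r) : initTab l n m (c, r, j) ≤ ∑ c', compSize l n m c' := by
  rw [initTab_eq h]
  have h1 := row_le_comp (n := n) hsupp h
  have h2 : (∑ c'' ∈ Finset.univ.filter (fun c'' : Fin l => c'' < c), compSize l n m c'') +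
      compSize l n m c ≤ ∑ c', compSize l n m c' := by
    have hc : c ∉ Finset.univ.filter (fun c'' : Fin l => c'' < c) := by simp
    have := Finset.sum_le_sum_of_subset
      (s := insert c (Finset.univ.filter (fun c'' : Fin l => c'' < c)))
      (t := Finset.univ) (f := compSize l n m) (by intro z _; exact Finset.mem_univ z)
    rw [Finset.sum_insert hc] at this; omega
  omega

/-- strict monotonicity of `initTab` in reading order -/
theorem init_lt (hsupp : ∀ c r, m c r ≠ 0 → r < n) {c c' : Fin l} {r j r' j' : ℕ}
    (hx : j < m c r) (hy : j' < m c' r')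
    (h : c < c' ∨ (c = c' ∧ (r < r' ∨ (r = r' ∧ j < j')))) :
    initTab l n m (c, r, j) < initTab l n m (c', r', j') := by
  rw [initTab_eq hx, initTab_eq hy]
  rcases h with h | ⟨rfl, h⟩
  · have h1 := row_le_comp (n := n) hsupp hx
    have h2 := comp_le_S (n := n) (m := m) h
    have h3 : (0:ℕ) ≤ ∑ r'' ∈ Finset.range r', m c' r'' := Nat.zero_le _
    omega
  · rcases h with h | ⟨rfl, h⟩
    · have h1 : (∑ r'' ∈ Finset.range r, m c r'') + j + 1 ≤
          ∑ r'' ∈ Finset.range (r + 1), m c r'' := by rw [Finset.sum_range_succ]; omega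
      have h2 : (∑ r'' ∈ Finset.range (r + 1), m c r'') ≤ ∑ r'' ∈ Finset.range r', m c r'' :=
        Finset.sum_le_sum_of_subset (Finset.range_subset_range.2 (by omega))
      omega
    · omega

theorem init_injOn (hsupp : ∀ c r, m c r ≠ 0 → r < n) :
    Set.InjOn (initTab l n m) (diag l m) := by
  rintro ⟨c, r, j⟩ hx ⟨c', r', j'⟩ hy hv
  rw [mem_diagP] at hx hy
  by_contra hne
  have htri : (c < c' ∨ (c = c' ∧ (r < r' ∨ (r = r' ∧ j < j')))) ∨
      (c' < c ∨ (c' = c ∧ (r' < r ∨ (r' = r ∧ j' < j)))) := by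
    rcases lt_trichotomy c c' with h | rfl | h
    · exact Or.inl (Or.inl h)
    · rcases lt_trichotomy r r' with h | rfl | h
      · exact Or.inl (Or.inr ⟨rfl, Or.inl h⟩)
      · rcases lt_trichotomy j j' with h | rfl | h
        · exact Or.inl (Or.inr ⟨rfl, Or.inr ⟨rfl, h⟩⟩)
        · exact absurd rfl hne
        · exact Or.inr (Or.inr ⟨rfl, Or.inr ⟨rfl, h⟩⟩)
      · exact Or.inr (Or.inr ⟨rfl, Or.inl h⟩)
    · exact Or.inr (Or.inl h)
  rcases htri with h | h
  · exact absurd hv (Nat.ne_of_lt (init_lt hsupp hx hy h))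
  · exact absurd hv.symm (Nat.ne_of_lt (init_lt hsupp hy hx h))

theorem init_row_succ {c : Fin l} {r j : ℕ} (h : j + 1 < m c r) :
    initTab l n m (c, r, j + 1) = initTab l n m (c, r, j) + 1 := by
  rw [initTab_eq h, initTab_eq (by omega)]; omega

/-- the diagram as a Finset -/
def DF (l n : ℕ) (m : Fin l → ℕ → ℕ) : Finset (Node l) :=
  (Finset.univ ×ˢ Finset.range n ×ˢ Finset.range n).filter
    (fun x => x.2.2 < m x.1 x.2.1)

theorem mem_DF (hsupp : ∀ c r, m c r ≠ 0 → r < n) (hbox : ∀ c r, m c r ≤ n)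
    {x : Node l} : x ∈ DF l n m ↔ x ∈ diag l m := by
  obtain ⟨c, r, j⟩ := x
  simp only [DF, Finset.mem_filter, Finset.mem_product, Finset.mem_univ, true_and,
    Finset.mem_range, mem_diagP]
  constructor
  · rintro ⟨_, h⟩; exact h
  · intro h
    exact ⟨⟨hsupp c r (by omega), lt_of_lt_of_le h (hbox c r)⟩, h⟩

theorem card_DF (hbox : ∀ c r, m c r ≤ n) :
    (DF l n m).card = ∑ c', compSize l n m c' := by
  unfold DF
  rw [Finset.card_filter, Finset.sum_product]
  apply Finset.sum_congr rfl
  intro c _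
  rw [Finset.sum_product]
  unfold compSize
  apply Finset.sum_congr rfl
  intro r _
  have : ((Finset.range n).filter (fun j => j < m c r)) = Finset.range (m c r) := by
    ext j
    simp only [Finset.mem_filter, Finset.mem_range]
    constructor
    · rintro ⟨_, h⟩; exact h
    · intro h; exact ⟨lt_of_lt_of_le h (hbox c r), h⟩
  calc (∑ x ∈ Finset.range n, if x < m c r then 1 else 0)
      = ((Finset.range n).filter (fun j => j < m c r)).card := (Finset.card_filter _ _).symm
    _ = m c r := by rw [this, Finset.card_range]

theorem init_surj (hsupp : ∀ c r, m c r ≠ 0 → r < n) (hbox : ∀ c r, m c r ≤ n)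
    {v : ℕ} (hv1 : 1 ≤ v) (hv2 : v ≤ ∑ c', compSize l n m c') :
    ∃ x ∈ diag l m, initTab l n m x = v := by
  set N := ∑ c', compSize l n m c' with hN
  have hinj : Set.InjOn (initTab l n m) (DF l n m) := by
    intro x hx y hy h
    exact init_injOn hsupp ((mem_DF hsupp hbox).1 hx) ((mem_DF hsupp hbox).1 hy) h
  have hcard : ((DF l n m).image (initTab l n m)).card = N := by
    rw [Finset.card_image_of_injOn hinj, card_DF hbox]
  have hsub : (DF l n m).image (initTab l n m) ⊆ Finset.Icc 1 N := by
    intro v hv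
    simp only [Finset.mem_image] at hv
    obtain ⟨⟨c, r, j⟩, hx, rfl⟩ := hv
    have hx' := (mem_DF hsupp hbox).1 hx
    rw [mem_diagP] at hx'
    exact Finset.mem_Icc.2 ⟨init_pos hx', init_le_total hsupp hx'⟩
  have heq : (DF l n m).image (initTab l n m) = Finset.Icc 1 N := by
    apply Finset.eq_of_subset_of_card_le hsub
    rw [hcard, Nat.card_Icc]; omega
  have hv : v ∈ (DF l n m).image (initTab l n m) := by
    rw [heq, Finset.mem_Icc]; omega
  simp only [Finset.mem_image] at hv
  obtain ⟨x, hx, hxv⟩ := hv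
  exact ⟨x, (mem_DF hsupp hbox).1 hx, hxv⟩

end InitTab

open Finset

section Std
variable {l n : ℕ} {lam : Fin l → ℕ → ℕ} {T : Node l → ℕ}

theorem lam_box (hT : IsStdTab l n lam T) (c : Fin l) (r : ℕ) : lam c r ≤ n := by
  by_cases hr : r < n
  · have h1 : lam c r ≤ compSize l n lam c :=
      Finset.single_le_sum (f := fun r' => lam c r') (fun _ _ => Nat.zero_le _)
        (Finset.mem_range.2 hr)
    have h2 : compSize l n lam c ≤ ∑ c', compSize l n lam c' :=
      Finset.single_le_sum (f := fun c' => compSize l n lam c') (fun _ _ => Nat.zero_le _)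
        (Finset.mem_univ c)
    have h3 : (∑ c', compSize l n lam c') = n := hT.1.2.2
    unfold compSize at h1 h2 h3
    omega
  · by_contra h
    exact hr (hT.1.2.1 c r (by omega))

theorem T_mem (hT : IsStdTab l n lam T) {x : Node l} (hx : x ∈ diag l lam) :
    1 ≤ T x ∧ T x ≤ n := by
  have := hT.2.1.1.mapsTo hx
  exact ⟨this.1, this.2⟩

theorem T_zero (hT : IsStdTab l n lam T) {x : Node l} (hx : x ∉ diag l lam) : T x = 0 :=
  hT.2.1.2 x hx

theorem T_row_lt (hT : IsStdTab l n lam T) {c : Fin l} {r j1 j2 : ℕ}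
    (h12 : j1 < j2) (h2 : j2 < lam c r) : T (c, r, j1) < T (c, r, j2) := by
  induction j2 with
  | zero => omega
  | succ k ih =>
    rcases eq_or_lt_of_le (Nat.lt_succ_iff.1 h12) with rfl | h
    · exact hT.2.2.1 c r j1 h2
    · exact (ih h (by omega)).trans (hT.2.2.1 c r k h2)

theorem mu_le_lam (i : ℕ) (c : Fin l) (r : ℕ) : restShape l lam T i c r ≤ lam c r := by
  unfold restShape
  exact le_trans (Finset.card_filter_le _ _) (by rw [Finset.card_range])

theorem mem_mu (hT : IsStdTab l n lam T) {i : ℕ} {c : Fin l} {r jj : ℕ}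
    (hx : jj < lam c r) : jj < restShape l lam T i c r ↔ T (c, r, jj) ≤ i := by
  set S := (Finset.range (lam c r)).filter (fun j => T (c, r, j) ≤ i) with hS
  have hdc : ∀ b1 b2 : ℕ, b1 < b2 → b2 ∈ S → b1 ∈ S := by
    intro b1 b2 h12 hb2
    simp only [hS, Finset.mem_filter, Finset.mem_range] at hb2 ⊢
    exact ⟨by omega, le_trans (le_of_lt (T_row_lt hT h12 hb2.1)) hb2.2⟩
  have key : ∀ jj' : ℕ, jj' ∈ S ↔ jj' < S.card := by
    intro jj'
    constructor
    · intro h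
      have : Finset.range (jj' + 1) ⊆ S := by
        intro b hb
        rcases Nat.lt_succ_iff_lt_or_eq.1 (Finset.mem_range.1 hb) with hb' | rfl
        · exact hdc b jj' hb' h
        · exact h
      have := Finset.card_le_card this
      rw [Finset.card_range] at this; omega
    · intro h
      by_contra hns
      have : S ⊆ Finset.range jj' := by
        intro b hb
        rw [Finset.mem_range]
        by_contra hb'
        rcases eq_or_lt_of_le (Nat.le_of_not_lt hb') with rfl | hlt
        · exact hns hb
        · exact hns (hdc jj' b hlt hb)
      have := Finset.card_le_card this
      rw [Finset.card_range] at this; omega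
  have : jj < restShape l lam T i c r ↔ jj ∈ S := (key jj).symm
  rw [this, hS, Finset.mem_filter, Finset.mem_range]
  constructor
  · rintro ⟨_, h⟩; exact h
  · intro h; exact ⟨hx, h⟩

theorem mu_supp (hT : IsStdTab l n lam T) (i : ℕ) (c : Fin l) (r : ℕ)
    (h : restShape l lam T i c r ≠ 0) : r < n := by
  have h1 := mu_le_lam (lam := lam) (T := T) i c r
  exact hT.1.2.1 c r (by omega)

theorem mu_box (hT : IsStdTab l n lam T) (i : ℕ) (c : Fin l) (r : ℕ) :
    restShape l lam T i c r ≤ n :=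
  le_trans (mu_le_lam i c r) (lam_box hT c r)

theorem mu_anti (hT : IsStdTab l n lam T) (i : ℕ) (c : Fin l) (r : ℕ) :
    restShape l lam T i c (r + 1) ≤ restShape l lam T i c r := by
  set k := restShape l lam T i c (r + 1) with hk
  rcases Nat.eq_zero_or_pos k with h0 | hpos
  · omega
  · have hkl : k ≤ lam c (r + 1) := mu_le_lam i c (r + 1)
    have h1 : k - 1 < lam c (r + 1) := by omega
    have h2 : T (c, r + 1, k - 1) ≤ i := (mem_mu hT h1).1 (by omega)
    have h3 : k - 1 < lam c r := lt_of_lt_of_le h1 (hT.1.1 c (by omega))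
    have h4 : T (c, r, k - 1) < T (c, r + 1, k - 1) := hT.2.2.2 c r (k - 1) h1
    have h5 : (k - 1) < restShape l lam T i c r := (mem_mu hT h3).2 (by omega)
    omega

theorem diag_mu_sub (hT : IsStdTab l n lam T) (i : ℕ) :
    diag l (restShape l lam T i) ⊆ diag l lam := by
  rintro ⟨c, r, jj⟩ hx
  rw [mem_diagP] at hx ⊢
  exact lt_of_lt_of_le hx (mu_le_lam i c r)

theorem mem_diagP_mu (hT : IsStdTab l n lam T) {i : ℕ} {x : Node l} :
    x ∈ diag l (restShape l lam T i) ↔ x ∈ diag l lam ∧ T x ≤ i := by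
  obtain ⟨c, r, jj⟩ := x
  constructor
  · intro h
    have h1 : (c, r, jj) ∈ diag l lam := diag_mu_sub hT i h
    exact ⟨h1, (mem_mu hT (mem_diagP.1 h1)).1 (mem_diagP.1 h)⟩
  · rintro ⟨h1, h2⟩
    exact mem_diagP.2 ((mem_mu hT (mem_diagP.1 h1)).2 h2)

theorem DF_mu (hT : IsStdTab l n lam T) (i : ℕ) :
    DF l n (restShape l lam T i) = (DF l n lam).filter (fun x => T x ≤ i) := by
  ext x
  rw [mem_DF (mu_supp hT i) (mu_box hT i), Finset.mem_filter,
    mem_DF (fun c r => hT.1.2.1 c r) (lam_box hT), mem_diagP_mu hT]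

theorem mu_total (hT : IsStdTab l n lam T) {i : ℕ} (hi : i ≤ n) :
    (∑ c', compSize l n (restShape l lam T i) c') = i := by
  rw [← card_DF (mu_box hT i), DF_mu hT i]
  have : ((DF l n lam).filter (fun x => T x ≤ i)).card = (Finset.Icc 1 i).card := by
    apply Finset.card_bij (fun x _ => T x)
    · intro x hx
      rw [Finset.mem_filter, mem_DF (fun c r => hT.1.2.1 c r) (lam_box hT)] at hx
      exact Finset.mem_Icc.2 ⟨(T_mem hT hx.1).1, hx.2⟩
    · intro x hx y hy h
      rw [Finset.mem_filter, mem_DF (fun c r => hT.1.2.1 c r) (lam_box hT)] at hx hy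
      exact hT.2.1.1.injOn hx.1 hy.1 h
    · intro v hv
      rw [Finset.mem_Icc] at hv
      have : v ∈ Set.Icc 1 n := ⟨hv.1, hv.2.trans hi⟩
      obtain ⟨x, hx, hxv⟩ := hT.2.1.1.surjOn this
      refine ⟨x, ?_, hxv⟩
      rw [Finset.mem_filter, mem_DF (fun c r => hT.1.2.1 c r) (lam_box hT)]
      exact ⟨hx, by omega⟩
  rw [this, Nat.card_Icc]; omega

theorem mu_n (hT : IsStdTab l n lam T) : restShape l lam T n = lam := by
  funext c r
  unfold restShape
  rw [Finset.filter_true_of_mem, Finset.card_range]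
  intro j hj
  exact (T_mem hT (mem_diagP.2 (Finset.mem_range.1 hj))).2

theorem hex (hT : IsStdTab l n lam T) {i : ℕ} (h1 : 1 ≤ i) (h2 : i ≤ n) :
    ∃ x, x ∈ diag l lam ∧ T x = i := by
  obtain ⟨x, hx, hxv⟩ := hT.2.1.1.surjOn (Set.mem_Icc.2 ⟨h1, h2⟩)
  exact ⟨x, hx, hxv⟩

end Std

open Finset

section Mid
variable {l n : ℕ} {lam : Fin l → ℕ → ℕ} {T : Node l → ℕ}

/-- the intermediate tableau: entries `> i` from `T`, entries `≤ i` obtained from the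
initial tableau of the shape of `T|_i` by the partial cycle `cycVal a j`. -/
def midT (l n : ℕ) (lam : Fin l → ℕ → ℕ) (T : Node l → ℕ) (i j : ℕ) : Node l → ℕ :=
  fun x => if i < T x then T x
    else cycVal (aEntry l n lam T i) j (initTab l n (restShape l lam T i) x)

theorem mu_mono_i {i i' : ℕ} (h : i' ≤ i) (c : Fin l) (r : ℕ) :
    restShape l lam T i' c r ≤ restShape l lam T i c r := by
  unfold restShape
  apply Finset.card_le_card
  intro j hj
  rw [Finset.mem_filter] at hj ⊢
  exact ⟨hj.1, by omega⟩

section Fixi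
variable (hT : IsStdTab l n lam T) {i : ℕ} (h1 : 1 ≤ i) (h2 : i ≤ n)
  {ci : Fin l} {ri ji : ℕ} (hxl : ji < lam ci ri) (hTx : T (ci, ri, ji) = i)

include hT h1 h2 hxl hTx

theorem D1 : restShape l lam T i ci ri = ji + 1 := by
  have hmem : ji < restShape l lam T i ci ri := (mem_mu hT hxl).2 (by omega)
  by_contra hne
  have hlt : ji + 1 < restShape l lam T i ci ri := by omega
  have hl : ji + 1 < lam ci ri := lt_of_lt_of_le hlt (mu_le_lam i ci ri)
  have hle : T (ci, ri, ji + 1) ≤ i := (mem_mu hT hl).1 hlt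
  have := hT.2.2.1 ci ri ji hl
  omega

theorem D2 {c : Fin l} {r : ℕ} (hne : ¬(c = ci ∧ r = ri)) :
    restShape l lam T (i - 1) c r = restShape l lam T i c r := by
  have hle : restShape l lam T (i - 1) c r ≤ restShape l lam T i c r :=
    mu_mono_i (by omega) c r
  by_contra hlt'
  have hlt : restShape l lam T (i - 1) c r < restShape l lam T i c r := by omega
  have hjl : restShape l lam T (i - 1) c r < lam c r :=
    lt_of_lt_of_le hlt (mu_le_lam i c r)
  have hup : T (c, r, restShape l lam T (i - 1) c r) ≤ i := (mem_mu hT hjl).1 hlt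
  have hdn : ¬ T (c, r, restShape l lam T (i - 1) c r) ≤ i - 1 := fun h => by
    have := (mem_mu (i := i - 1) hT hjl).2 h; omega
  have heq : ((c, r, restShape l lam T (i - 1) c r) : Node l) = ((ci, ri, ji) : Node l) :=
    hT.2.1.1.injOn (mem_diagP.2 hjl) (mem_diagP.2 hxl) (by rw [hTx]; omega)
  have hc : c = ci := congrArg (fun y : Node l => y.1) heq
  have hr : r = ri := congrArg (fun y : Node l => y.2.1) heq
  exact hne ⟨hc, hr⟩

theorem D3 : restShape l lam T (i - 1) ci ri = ji := by
  have hle : restShape l lam T (i - 1) ci ri ≤ ji := by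
    by_contra h
    have : T (ci, ri, ji) ≤ i - 1 := (mem_mu hT hxl).1 (by omega)
    omega
  by_contra hne
  have hlt : restShape l lam T (i - 1) ci ri < ji := by omega
  have hjl : restShape l lam T (i - 1) ci ri < lam ci ri := by omega
  have hD1 := D1 hT h1 h2 hxl hTx
  have hup : T (ci, ri, restShape l lam T (i - 1) ci ri) ≤ i :=
    (mem_mu hT hjl).1 (by omega)
  have hdn : ¬ T (ci, ri, restShape l lam T (i - 1) ci ri) ≤ i - 1 := fun h => by
    have := (mem_mu (i := i - 1) hT hjl).2 h; omega
  have heq : ((ci, ri, restShape l lam T (i - 1) ci ri) : Node l) =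
      ((ci, ri, ji) : Node l) :=
    hT.2.1.1.injOn (mem_diagP.2 hjl) (mem_diagP.2 hxl) (by rw [hTx]; omega)
  have hj : restShape l lam T (i - 1) ci ri = ji :=
    congrArg (fun y : Node l => y.2.2) heq
  exact hne hj

theorem ri_lt_n : ri < n := hT.1.2.1 ci ri (by omega)

theorem D_row (c : Fin l) (r : ℕ) :
    restShape l lam T i c r =
      restShape l lam T (i - 1) c r + (if c = ci ∧ r = ri then 1 else 0) := by
  by_cases h : c = ci ∧ r = ri
  · obtain ⟨rfl, rfl⟩ := h
    rw [if_pos ⟨rfl, rfl⟩, D1 hT h1 h2 hxl hTx, D3 hT h1 h2 hxl hTx]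
  · rw [if_neg h, D2 hT h1 h2 hxl hTx h]; omega

theorem D4 (c : Fin l) :
    compSize l n (restShape l lam T i) c =
      compSize l n (restShape l lam T (i - 1)) c + (if c = ci then 1 else 0) := by
  unfold compSize
  have hcong : ∀ r ∈ Finset.range n, restShape l lam T i c r =
      restShape l lam T (i - 1) c r + (if c = ci ∧ r = ri then 1 else 0) :=
    fun r _ => D_row hT h1 h2 hxl hTx c r
  rw [Finset.sum_congr rfl hcong, Finset.sum_add_distrib]
  congr 1
  by_cases hc : c = ci
  · subst hc
    have hcong2 : ∀ r ∈ Finset.range n, (if c = c ∧ r = ri then 1 else 0) =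
        (if r = ri then (1:ℕ) else 0) := by intro r _; simp
    rw [Finset.sum_congr rfl hcong2, Finset.sum_ite_eq' (Finset.range n) ri (fun _ => (1:ℕ)),
      if_pos (Finset.mem_range.2 (ri_lt_n hT h1 h2 hxl hTx)), if_pos rfl]
  · have hcong2 : ∀ r ∈ Finset.range n, (if c = ci ∧ r = ri then 1 else 0) = (0:ℕ) := by
      intro r _; simp [hc]
    rw [Finset.sum_congr rfl hcong2, Finset.sum_const_zero, if_neg hc]

theorem D5 (c : Fin l) :
    (∑ c' ∈ Finset.univ.filter (fun c' : Fin l => c' < c),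
        compSize l n (restShape l lam T i) c') =
      (∑ c' ∈ Finset.univ.filter (fun c' : Fin l => c' < c),
        compSize l n (restShape l lam T (i - 1)) c') + (if ci < c then 1 else 0) := by
  have hcong : ∀ c' ∈ Finset.univ.filter (fun c' : Fin l => c' < c),
      compSize l n (restShape l lam T i) c' =
        compSize l n (restShape l lam T (i - 1)) c' + (if c' = ci then 1 else 0) :=
    fun c' _ => D4 hT h1 h2 hxl hTx c'
  rw [Finset.sum_congr rfl hcong, Finset.sum_add_distrib]
  congr 1
  rw [Finset.sum_ite_eq' (Finset.univ.filter (fun c' : Fin l => c' < c)) ci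
    (fun _ => (1:ℕ))]
  by_cases h : ci < c
  · rw [if_pos (by simp [h]), if_pos h]
  · rw [if_neg (by simp [h]), if_neg h]

theorem D6 (c : Fin l) (r : ℕ) :
    (∑ r' ∈ Finset.range r, restShape l lam T i c r') =
      (∑ r' ∈ Finset.range r, restShape l lam T (i - 1) c r') +
        (if c = ci ∧ ri < r then 1 else 0) := by
  have hcong : ∀ r' ∈ Finset.range r, restShape l lam T i c r' =
      restShape l lam T (i - 1) c r' + (if c = ci ∧ r' = ri then 1 else 0) :=
    fun r' _ => D_row hT h1 h2 hxl hTx c r'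
  rw [Finset.sum_congr rfl hcong, Finset.sum_add_distrib]
  congr 1
  by_cases hc : c = ci
  · subst hc
    have hcong2 : ∀ r' ∈ Finset.range r, (if c = c ∧ r' = ri then 1 else 0) =
        (if r' = ri then (1:ℕ) else 0) := by intro r' _; simp
    rw [Finset.sum_congr rfl hcong2, Finset.sum_ite_eq' (Finset.range r) ri (fun _ => (1:ℕ))]
    by_cases h : ri < r
    · rw [if_pos (Finset.mem_range.2 h), if_pos ⟨rfl, h⟩]
    · rw [if_neg (by simp [h]), if_neg (by tauto)]
  · have h0 : ∀ r' ∈ Finset.range r, (if c = ci ∧ r' = ri then 1 else 0) = (0:ℕ) := by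
      intro r' _; simp [hc]
    rw [Finset.sum_congr rfl h0, Finset.sum_const_zero, if_neg (by tauto)]

/-- the initial-tableau values of `μ_i` and `μ_{i-1}` differ exactly on nodes
reading-after the removed node. -/
theorem D7 {c : Fin l} {r jj : ℕ} (hmem : jj < restShape l lam T (i - 1) c r) :
    initTab l n (restShape l lam T i) (c, r, jj) =
      initTab l n (restShape l lam T (i - 1)) (c, r, jj) +
        (if ci < c ∨ (c = ci ∧ ri < r) then 1 else 0) := by
  have hmem' : jj < restShape l lam T i c r :=
    lt_of_lt_of_le hmem (mu_mono_i (by omega) c r)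
  rw [initTab_eq hmem', initTab_eq hmem, D5 hT h1 h2 hxl hTx c, D6 hT h1 h2 hxl hTx c r]
  by_cases ha : ci < c
  · have hnot : ¬(c = ci ∧ ri < r) := by rintro ⟨rfl, _⟩; exact lt_irrefl c ha
    rw [if_pos ha, if_neg hnot, if_pos (Or.inl ha)]
    omega
  · rw [if_neg ha]
    by_cases hb : c = ci ∧ ri < r
    · rw [if_pos hb, if_pos (Or.inr hb)]
      omega
    · rw [if_neg hb, if_neg (by tauto)]
      omega

theorem xi_mem_mu : ji < restShape l lam T i ci ri := (mem_mu hT hxl).2 (by omega)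

theorem aEntry_eq :
    aEntry l n lam T i = initTab l n (restShape l lam T i) (ci, ri, ji) := by
  have hEx : ∃ x, x ∈ diag l lam ∧ T x = i := ⟨(ci, ri, ji), mem_diagP.2 hxl, hTx⟩
  have hch : hEx.choose = ((ci, ri, ji) : Node l) := by
    have hs := hEx.choose_spec
    exact hT.2.1.1.injOn hs.1 (mem_diagP.2 hxl) (by rw [hs.2, hTx])
  unfold aEntry
  rw [dif_pos hEx]
  unfold interT
  rw [hch, if_neg (by rw [hTx]; omega), Nat.add_sub_cancel]

theorem aEntry_pos : 1 ≤ aEntry l n lam T i := by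
  rw [aEntry_eq hT h1 h2 hxl hTx]
  exact init_pos (xi_mem_mu hT h1 h2 hxl hTx)

theorem aEntry_le : aEntry l n lam T i ≤ i := by
  rw [aEntry_eq hT h1 h2 hxl hTx]
  exact le_trans (init_le_total (mu_supp hT i) (xi_mem_mu hT h1 h2 hxl hTx))
    (le_of_eq (mu_total hT h2))

theorem L2 : midT l n lam T i i = interT l n lam T i := by
  have haE := aEntry_eq hT h1 h2 hxl hTx
  have hamem := xi_mem_mu hT h1 h2 hxl hTx
  have ha1 := aEntry_pos hT h1 h2 hxl hTx
  funext x
  obtain ⟨c, r, jj⟩ := x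
  unfold midT interT
  by_cases hd : jj < lam c r
  · rcases lt_trichotomy (T (c, r, jj)) i with hlt | heq | hgt
    · -- T x < i
      rw [if_neg (by omega), if_neg (by omega)]
      have hmem : jj < restShape l lam T (i - 1) c r := (mem_mu hT hd).2 (by omega)
      have hmem' : jj < restShape l lam T i c r :=
        lt_of_lt_of_le hmem (mu_mono_i (by omega) c r)
      have hD7 := D7 hT h1 h2 hxl hTx hmem
      have htot : initTab l n (restShape l lam T i) (c, r, jj) ≤ i :=
        le_trans (init_le_total (mu_supp hT i) hmem') (le_of_eq (mu_total hT h2))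
      by_cases hafter : ci < c ∨ (c = ci ∧ ri < r)
      · have hagt : aEntry l n lam T i < initTab l n (restShape l lam T i) (c, r, jj) := by
          rw [haE]
          exact init_lt (mu_supp hT i) hamem hmem'
            (by rcases hafter with h | ⟨rfl, h⟩
                · exact Or.inl h
                · exact Or.inr ⟨rfl, Or.inl h⟩)
        rw [if_pos hafter] at hD7
        unfold cycVal
        rw [if_neg (by omega), if_pos ⟨hagt, htot⟩]
        omega
      · have hbefore : c < ci ∨ (c = ci ∧ (r < ri ∨ (r = ri ∧ jj < ji))) := by
          rcases lt_trichotomy c ci with h | rfl | h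
          · exact Or.inl h
          · rcases lt_trichotomy r ri with h | rfl | h
            · exact Or.inr ⟨rfl, Or.inl h⟩
            · refine Or.inr ⟨rfl, Or.inr ⟨rfl, ?_⟩⟩
              have := D3 hT h1 h2 hxl hTx
              omega
            · exact absurd (Or.inr ⟨rfl, h⟩) hafter
          · exact absurd (Or.inl h) hafter
        have hblt : initTab l n (restShape l lam T i) (c, r, jj) < aEntry l n lam T i := by
          rw [haE]
          exact init_lt (mu_supp hT i) hmem' hamem hbefore
        rw [if_neg hafter] at hD7
        unfold cycVal
        rw [if_neg (by omega), if_neg (by omega)]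
        omega
    · -- T x = i : this is the removed node
      rw [if_neg (by omega), if_pos (by omega)]
      have hxx : ((c, r, jj) : Node l) = ((ci, ri, ji) : Node l) :=
        hT.2.1.1.injOn (mem_diagP.2 hd) (mem_diagP.2 hxl) (by rw [heq, hTx])
      rw [hxx, ← haE, hTx]
      unfold cycVal
      rw [if_pos rfl]
    · rw [if_pos hgt, if_pos (by omega)]
  · -- off the diagram
    have hd' : ((c, r, jj) : Node l) ∉ diag l lam := hd
    have hT0 : T (c, r, jj) = 0 := T_zero hT hd'
    rw [hT0, if_neg (by omega), if_neg (by omega)]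
    have hnm : ((c, r, jj) : Node l) ∉ diag l (restShape l lam T i) :=
      fun h => hd' (diag_mu_sub hT i h)
    have hnm' : ((c, r, jj) : Node l) ∉ diag l (restShape l lam T (i - 1)) :=
      fun h => hd' (diag_mu_sub hT (i - 1) h)
    rw [initTab_eq_zero hnm, initTab_eq_zero hnm', cyc_zero _ _ ha1]

end Fixi

theorem midT_aEntry (i : ℕ) :
    midT l n lam T i (aEntry l n lam T i) = interT l n lam T (i + 1) := by
  funext x
  unfold midT interT
  by_cases h : i < T x
  · rw [if_pos h, if_pos (by omega)]
  · rw [if_neg h, if_neg (by omega), cyc_id, Nat.add_sub_cancel]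

theorem midT_zero (hT : IsStdTab l n lam T) : midT l n lam T 0 0 = T := by
  funext x
  unfold midT
  by_cases hd : x ∈ diag l lam
  · exact if_pos (T_mem hT hd).1
  · have hT0 : T x = 0 := T_zero hT hd
    rw [hT0, if_neg (by omega)]
    have hnm : x ∉ diag l (restShape l lam T 0) := fun h =>
      hd ((mem_diagP_mu hT).1 h).1
    rw [initTab_eq_zero hnm]
    unfold cycVal
    split_ifs <;> omega

theorem midT_start (hT : IsStdTab l n lam T) :
    midT l n lam T n (aEntry l n lam T n) = initTab l n lam := by
  rw [midT_aEntry]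
  funext x
  unfold interT
  have hle : T x ≤ n := by
    by_cases hd : x ∈ diag l lam
    · exact (T_mem hT hd).2
    · rw [T_zero hT hd]; omega
  rw [if_neg (by omega)]
  rw [show n + 1 - 1 = n by omega, mu_n hT]

theorem midT_step (hT : IsStdTab l n lam T) {i j : ℕ}
    (ha1 : 1 ≤ aEntry l n lam T i) (hj : aEntry l n lam T i ≤ j) (hji : j < i) :
    actT l (midT l n lam T i j) (sw j) = midT l n lam T i (j + 1) := by
  funext x
  unfold actT midT
  by_cases hgt : i < T x
  · rw [if_pos hgt, if_pos hgt]
    apply Equiv.swap_apply_of_ne_of_ne <;> omega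
  · rw [if_neg hgt, if_neg hgt]
    exact cyc_swap _ _ _ ha1 hj

end Mid

open Finset

section MidStd
variable {l n : ℕ} {lam : Fin l → ℕ → ℕ} {T : Node l → ℕ}

theorem midT_std (hT : IsStdTab l n lam T) {i j : ℕ} (h1 : 1 ≤ i) (hi : i ≤ n)
    (haj : aEntry l n lam T i ≤ j) (hji : j ≤ i) :
    IsStdTab l n lam (midT l n lam T i j) := by
  obtain ⟨x0, hxd, hTx⟩ := hex hT h1 hi
  obtain ⟨ci, ri, ji⟩ := x0
  have hxl : ji < lam ci ri := hxd
  have haE := aEntry_eq hT h1 hi hxl hTx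
  have ha1 := aEntry_pos hT h1 hi hxl hTx
  have hximem := xi_mem_mu hT h1 hi hxl hTx
  have hD1 := D1 hT h1 hi hxl hTx
  set a := aEntry l n lam T i with haa
  -- value bound for initTab of the restricted shape
  have hbound : ∀ {c : Fin l} {r jj : ℕ}, jj < restShape l lam T i c r →
      initTab l n (restShape l lam T i) (c, r, jj) ≤ i := by
    intro c r jj h
    exact le_trans (init_le_total (mu_supp hT i) h) (le_of_eq (mu_total hT hi))
  -- if a node of μ has value a, it is the removed node
  have hnode_a : ∀ {c : Fin l} {r jj : ℕ}, jj < restShape l lam T i c r →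
      initTab l n (restShape l lam T i) (c, r, jj) = a →
      ((c, r, jj) : Node l) = ((ci, ri, ji) : Node l) := by
    intro c r jj h hv
    exact init_injOn (mu_supp hT i) h hximem (by rw [hv, haE])
  have hlo : ∀ {x : Node l}, T x ≤ i → midT l n lam T i j x =
      cycVal a j (initTab l n (restShape l lam T i) x) := by
    intro x h
    unfold midT
    rw [if_neg (by omega)]
  have hhi : ∀ {x : Node l}, i < T x → midT l n lam T i j x = T x := by
    intro x h
    unfold midT
    rw [if_pos h]
  refine ⟨hT.1, ⟨⟨?_, ?_, ?_⟩, ?_⟩, ?_, ?_⟩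
  · -- MapsTo
    rintro ⟨c, r, jj⟩ hx
    have hxx : jj < lam c r := hx
    by_cases hTy : T (c, r, jj) ≤ i
    · have hm : jj < restShape l lam T i c r := (mem_mu hT hxx).2 hTy
      rw [hlo hTy]
      constructor
      · exact cyc_pos a j _ ha1 haj (init_pos hm)
      · exact le_trans (cyc_le a j i _ hji (hbound hm)) hi
    · rw [hhi (show i < T (c, r, jj) by omega)]
      exact ⟨by omega, (T_mem hT hx).2⟩
  · -- InjOn
    rintro ⟨c, r, jj⟩ hx ⟨c', r', jj'⟩ hy hv
    have hxx : jj < lam c r := hx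
    have hyy : jj' < lam c' r' := hy
    by_cases hTy1 : T (c, r, jj) ≤ i <;> by_cases hTy2 : T (c', r', jj') ≤ i
    · have hm1 : jj < restShape l lam T i c r := (mem_mu hT hxx).2 hTy1
      have hm2 : jj' < restShape l lam T i c' r' := (mem_mu hT hyy).2 hTy2
      rw [hlo hTy1, hlo hTy2] at hv
      exact init_injOn (mu_supp hT i) hm1 hm2 (cyc_inj a j haj hv)
    · exfalso
      have hm1 : jj < restShape l lam T i c r := (mem_mu hT hxx).2 hTy1
      rw [hlo hTy1, hhi (show i < T (c', r', jj') by omega)] at hv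
      have := cyc_le a j i _ hji (hbound hm1)
      omega
    · exfalso
      have hm2 : jj' < restShape l lam T i c' r' := (mem_mu hT hyy).2 hTy2
      rw [hhi (show i < T (c, r, jj) by omega), hlo hTy2] at hv
      have := cyc_le a j i _ hji (hbound hm2)
      omega
    · rw [hhi (show i < T (c, r, jj) by omega), hhi (show i < T (c', r', jj') by omega)] at hv
      exact hT.2.1.1.injOn hx hy hv
  · -- SurjOn
    intro v hv
    obtain ⟨hv1, hv2⟩ := hv
    by_cases hvi : v ≤ i
    · obtain ⟨x, hxm, hxv⟩ := init_surj (mu_supp hT i) (mu_box hT i)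
        (cycInv_pos a j v ha1 hv1) (by rw [mu_total hT hi]; exact cycInv_le a j i v haj hji hvi)
      have hxmem : x ∈ diag l lam := diag_mu_sub hT i hxm
      have hTxle : T x ≤ i := ((mem_diagP_mu hT).1 hxm).2
      refine ⟨x, hxmem, ?_⟩
      rw [hlo hTxle, hxv, cyc_cycInv a j v haj]
    · obtain ⟨x, hxm, hxv⟩ := hT.2.1.1.surjOn (Set.mem_Icc.2 ⟨hv1, hv2⟩)
      refine ⟨x, hxm, ?_⟩
      rw [hhi (show i < T x by omega), hxv]
  · -- zero off the diagram
    intro x hx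
    have hT0 : T x = 0 := T_zero hT hx
    have hnm : x ∉ diag l (restShape l lam T i) := fun h => hx (diag_mu_sub hT i h)
    unfold midT
    rw [hT0, if_neg (by omega), initTab_eq_zero hnm, cyc_zero _ _ ha1]
  · -- rows increasing
    intro c r jj hr
    have hx : jj < lam c r := by omega
    by_cases hTy : T (c, r, jj + 1) ≤ i
    · have hTxy : T (c, r, jj) < T (c, r, jj + 1) := hT.2.2.1 c r jj hr
      have hm2 : jj + 1 < restShape l lam T i c r := (mem_mu hT hr).2 hTy
      have hm1 : jj < restShape l lam T i c r := by omega
      rw [hlo (show T (c, r, jj) ≤ i by omega), hlo hTy, init_row_succ hm2]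
      refine cyc_mono a j _ _ haj ?_ (by omega)
      intro hva
      have heq := hnode_a hm1 hva
      have hcc : c = ci := congrArg (fun y : Node l => y.1) heq
      have hrr : r = ri := congrArg (fun y : Node l => y.2.1) heq
      have hjj : jj = ji := congrArg (fun y : Node l => y.2.2) heq
      rw [← hcc, ← hrr] at hD1
      omega
    · rw [hhi (show i < T (c, r, jj + 1) by omega)]
      by_cases hTx2 : T (c, r, jj) ≤ i
      · have hm1 : jj < restShape l lam T i c r := (mem_mu hT hx).2 hTx2
        rw [hlo hTx2]
        have := cyc_le a j i _ hji (hbound hm1)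
        omega
      · rw [hhi (show i < T (c, r, jj) by omega)]
        exact hT.2.2.1 c r jj hr
  · -- columns increasing
    intro c r jj hc
    have hx : jj < lam c r := lt_of_lt_of_le hc (hT.1.1 c (by omega))
    by_cases hTy : T (c, r + 1, jj) ≤ i
    · have hTxy : T (c, r, jj) < T (c, r + 1, jj) := hT.2.2.2 c r jj hc
      have hm2 : jj < restShape l lam T i c (r + 1) := (mem_mu hT hc).2 hTy
      have hm1 : jj < restShape l lam T i c r := (mem_mu hT hx).2 (by omega)
      rw [hlo (show T (c, r, jj) ≤ i by omega), hlo hTy]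
      refine cyc_mono a j _ _ haj ?_
        (init_lt (mu_supp hT i) hm1 hm2 (Or.inr ⟨rfl, Or.inl (by omega)⟩))
      intro hva
      have heq := hnode_a hm1 hva
      have hcc : c = ci := congrArg (fun y : Node l => y.1) heq
      have hrr : r = ri := congrArg (fun y : Node l => y.2.1) heq
      have hjj : jj = ji := congrArg (fun y : Node l => y.2.2) heq
      rw [hcc, hrr, hjj] at hTy hc
      have hcol := hT.2.2.2 ci ri ji hc
      omega
    · rw [hhi (show i < T (c, r + 1, jj) by omega)]
      by_cases hTx2 : T (c, r, jj) ≤ i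
      · have hm1 : jj < restShape l lam T i c r := (mem_mu hT hx).2 hTx2
        rw [hlo hTx2]
        have := cyc_le a j i _ hji (hbound hm1)
        omega
      · rw [hhi (show i < T (c, r, jj) by omega)]
        exact hT.2.2.2 c r jj hc
end MidStd


section Main
variable {l n : ℕ} {lam : Fin l → ℕ → ℕ} {T : Node l → ℕ}

/-- the word `w_{i-1} w_{i-2} ⋯ w_0`. -/
def Vw (l n : ℕ) (lam : Fin l → ℕ → ℕ) (T : Node l → ℕ) (i : ℕ) : List ℕ :=
  ((List.range i).reverse.map (wordAt l n lam T)).flatten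

theorem Vw_zero : Vw l n lam T 0 = [] := rfl

theorem Vw_succ (i : ℕ) :
    Vw l n lam T (i + 1) = wordAt l n lam T i ++ Vw l n lam T i := by
  unfold Vw
  rw [List.range_succ, List.reverse_append]
  rfl

theorem stdWord_eq : stdWord l n lam T = Vw l n lam T (n + 1) := rfl

theorem aEntry_zero (hT : IsStdTab l n lam T) : aEntry l n lam T 0 = 0 := by
  unfold aEntry
  rw [dif_neg]
  rintro ⟨x, hx, hTx⟩
  have := (T_mem hT hx).1
  omega

theorem wordAt_eq (i : ℕ) :
    wordAt l n lam T i = List.range' (aEntry l n lam T i) (i - aEntry l n lam T i) := rfl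

theorem wordAt_cons {i : ℕ} (h : aEntry l n lam T i < i) :
    wordAt l n lam T i = aEntry l n lam T i ::
      (List.range' (aEntry l n lam T i + 1) (i - (aEntry l n lam T i + 1))) := by
  rw [wordAt_eq]
  have : i - aEntry l n lam T i = (i - (aEntry l n lam T i + 1)) + 1 := by omega
  rw [this, List.range'_succ]

theorem wordAt_nil {i : ℕ} (h : ¬ aEntry l n lam T i < i) : wordAt l n lam T i = [] := by
  rw [wordAt_eq]
  have : i - aEntry l n lam T i = 0 := by omega
  rw [this]
  rfl

/-- skipping over empty blocks: if the remaining word `w_{i-1} ⋯ w_0` is nonempty then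
the current tableau `t^{(i)}` can be written as an intermediate tableau whose block
still has at least one letter to apply, the first remaining letter being `j'`. -/
theorem adv (hT : IsStdTab l n lam T) :
    ∀ i, i ≤ n → Vw l n lam T i ≠ [] →
      ∃ i' j', i' ≤ n ∧ 1 ≤ i' ∧ aEntry l n lam T i' ≤ j' ∧ j' < i' ∧
        interT l n lam T i = midT l n lam T i' j' ∧
        Vw l n lam T i = j' ::
          (List.range' (j' + 1) (i' - (j' + 1)) ++ Vw l n lam T i') := by
  intro i
  induction i with
  | zero => intro _ hne; exact absurd Vw_zero hne
  | succ i ih =>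
    intro hin hne
    rw [Vw_succ] at hne ⊢
    by_cases h : aEntry l n lam T i < i
    · have h1i : 1 ≤ i := by omega
      refine ⟨i, aEntry l n lam T i, by omega, h1i, le_rfl, h, ?_, ?_⟩
      · rw [← midT_aEntry]
      · rw [wordAt_cons h, List.cons_append]
    · rw [wordAt_nil h, List.nil_append] at hne ⊢
      have h1i : 1 ≤ i := by
        by_contra h0
        have : i = 0 := by omega
        rw [this] at hne
        exact hne Vw_zero
      obtain ⟨x0, hxd, hTx⟩ := hex hT h1i (by omega)
      obtain ⟨ci, ri, ji⟩ := x0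
      have hxl : ji < lam ci ri := hxd
      have hale : aEntry l n lam T i ≤ i := aEntry_le hT h1i (by omega) hxl hTx
      have hae : aEntry l n lam T i = i := by omega
      obtain ⟨i', j', hi', h1', ha', hj', heq, hV⟩ := ih (by omega) hne
      refine ⟨i', j', hi', h1', ha', hj', ?_, hV⟩
      calc interT l n lam T (i + 1) = midT l n lam T i (aEntry l n lam T i) :=
            (midT_aEntry i).symm
        _ = midT l n lam T i i := by rw [hae]
        _ = interT l n lam T i := L2 hT h1i (by omega) hxl hTx
        _ = midT l n lam T i' j' := heq

/-- the invariant: after applying `k` letters of the standard expression to `t^λ` we are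
at an intermediate tableau `midT i j`, with the remaining letters being
`j, j+1, …, i-1` followed by `w_{i-1} ⋯ w_0`. -/
def Good (l n : ℕ) (lam : Fin l → ℕ → ℕ) (T : Node l → ℕ) (k : ℕ) : Prop :=
  ∃ i j, i ≤ n ∧ aEntry l n lam T i ≤ j ∧ j ≤ i ∧ (i = 0 → j = 0) ∧
    actWord l (initTab l n lam) ((stdWord l n lam T).take k) = midT l n lam T i j ∧
    (stdWord l n lam T).drop k = List.range' j (i - j) ++ Vw l n lam T i

theorem good_zero (hT : IsStdTab l n lam T) : Good l n lam T 0 := by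
  refine ⟨n, aEntry l n lam T n, le_rfl, le_rfl, ?_, ?_, ?_, ?_⟩
  · by_cases hn : 1 ≤ n
    · obtain ⟨x0, hxd, hTx⟩ := hex hT hn le_rfl
      obtain ⟨ci, ri, ji⟩ := x0
      exact aEntry_le hT hn le_rfl hxd hTx
    · have : n = 0 := by omega
      subst this
      rw [aEntry_zero hT]
  · intro h0; subst h0; exact aEntry_zero hT
  · rw [List.take_zero]
    exact (midT_start hT).symm
  · rw [List.drop_zero, stdWord_eq, Vw_succ, wordAt_eq]

theorem good_step (hT : IsStdTab l n lam T) {k : ℕ}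
    (hk : k < (stdWord l n lam T).length) (hG : Good l n lam T k) :
    Good l n lam T (k + 1) := by
  obtain ⟨i, j, hi, haj, hji, h0, hact, hdrop⟩ := hG
  have hdne : (stdWord l n lam T).drop k ≠ [] := by
    intro h
    have := congrArg List.length h
    rw [List.length_drop] at this
    simp at this
    omega
  -- find the next letter `j₀` and the next state `(i₀, j₀)`
  have key : ∃ i0 j0, i0 ≤ n ∧ 1 ≤ i0 ∧ aEntry l n lam T i0 ≤ j0 ∧ j0 < i0 ∧
      actWord l (initTab l n lam) ((stdWord l n lam T).take k) = midT l n lam T i0 j0 ∧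
      (stdWord l n lam T).drop k = j0 ::
        (List.range' (j0 + 1) (i0 - (j0 + 1)) ++ Vw l n lam T i0) := by
    by_cases hjei : j < i
    · refine ⟨i, j, hi, by omega, haj, hjei, hact, ?_⟩
      rw [hdrop]
      have : i - j = (i - (j + 1)) + 1 := by omega
      rw [this, List.range'_succ, List.cons_append]
    · have hje : j = i := by omega
      subst hje
      rw [Nat.sub_self, show List.range' j 0 = [] from rfl, List.nil_append] at hdrop
      have h1i : 1 ≤ j := by
        by_contra h1
        have hj0 : j = 0 := by omega
        rw [hj0] at hdrop
        rw [hdrop, Vw_zero] at hdne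
        exact hdne rfl
      obtain ⟨x0, hxd, hTx⟩ := hex hT h1i hi
      obtain ⟨ci, ri, ji⟩ := x0
      have hxl : ji < lam ci ri := hxd
      obtain ⟨i0, j0, hi0, h10, ha0, hj0, heq, hV⟩ :=
        adv hT j hi (by rw [← hdrop]; exact hdne)
      refine ⟨i0, j0, hi0, h10, ha0, hj0, ?_, by rw [hdrop, hV]⟩
      rw [hact, L2 hT h1i hi hxl hTx, heq]
  obtain ⟨i0, j0, hi0, h10, ha0, hj0, hact0, hdrop0⟩ := key
  obtain ⟨x0, hxd, hTx⟩ := hex hT h10 hi0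
  obtain ⟨ci, ri, ji⟩ := x0
  have hxl : ji < lam ci ri := hxd
  have ha1 : 1 ≤ aEntry l n lam T i0 := aEntry_pos hT h10 hi0 hxl hTx
  refine ⟨i0, j0 + 1, hi0, by omega, by omega, by omega, ?_, ?_⟩
  · -- the action after one more letter
    have htake : (stdWord l n lam T).take (k + 1) =
        (stdWord l n lam T).take k ++ [j0] := by
      rw [List.take_succ]
      congr 1
      have h1 : (stdWord l n lam T)[k]? = ((stdWord l n lam T).drop k)[0]? := by
        simp [List.getElem?_drop]
      rw [h1, hdrop0]
      simp
    rw [htake]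
    unfold actWord
    rw [List.foldl_append]
    show actT l (actWord l (initTab l n lam) ((stdWord l n lam T).take k)) (sw j0) = _
    rw [hact0]
    exact midT_step hT ha1 ha0 hj0
  · -- the remaining word
    have h1 : (stdWord l n lam T).drop (k + 1) =
        ((stdWord l n lam T).drop k).drop 1 := by
      rw [List.drop_drop]
    rw [h1, hdrop0]
    show List.range' (j0 + 1) (i0 - (j0 + 1)) ++ Vw l n lam T i0 = _
    rfl

theorem good_all (hT : IsStdTab l n lam T) :
    ∀ k, k ≤ (stdWord l n lam T).length → Good l n lam T k := by
  intro k
  induction k with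
  | zero => intro _; exact good_zero hT
  | succ k ih => intro hk; exact good_step hT (by omega) (ih (by omega))

end Main

end
end Paper

namespace Paper

/-!
STATEMENT 6: if `t` is a standard `λ`-tableau and `d(t) = s_{r_1} ⋯ s_{r_m}` is its
standard expression, then for every `k ≤ m` the tableau `t^λ · s_{r_1} s_{r_2} ⋯ s_{r_k}`
is a standard `λ`-tableau.
-/
theorem statement6 (l n : ℕ) (lam : Fin l → ℕ → ℕ) (T : Node l → ℕ)
    (hT : IsStdTab l n lam T) (k : ℕ) (hk : k ≤ (stdWord l n lam T).length) :
    IsStdTab l n lam (actWord l (initTab l n lam) ((stdWord l n lam T).take k)) := by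
  obtain ⟨i, j, hi, haj, hji, h0, hact, -⟩ := good_all hT k hk
  rw [hact]
  by_cases h1 : 1 ≤ i
  · exact midT_std hT h1 hi haj hji
  · have hi0 : i = 0 := by omega
    subst hi0
    rw [h0 rfl, midT_zero hT]
    exact hT

end Paper
end
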